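/- arXiv:1412.4683 — 12 statements merged into one kernel-verified Lean document; each statement's English description precedes it below -/
import Mathlib

section
/- A collection B₁, …, Bₙ of subsets of a finite set X, each of cardinality at least 2, is separable if and only if there exist two-element subsets b₁ ⊆ B₁, …, bₙ ⊆ Bₙ such that the simple graph on X whose edge set is {b₁, …, bₙ} is bipartite (i.e., admits a proper 2-colouring of its vertices). -/
open Finset

/-- `A` separates `B` if both `A ∩ B` and `Aᶜ ∩ B` are nonempty. -/
def Separates {X : Type*} [Fintype X] [DecidableEq X] (A B : Finset X) : Prop :=
  (A ∩ B).Nonempty ∧ (Aᶜ ∩ B).Nonempty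

theorem stmt_3 {X : Type*} [Fintype X] [DecidableEq X] (n : ℕ) (B : Fin n → Finset X)
    (hB : ∀ i, 2 ≤ (B i).card) :
    (∃ A : Finset X, ∀ i, Separates A (B i)) ↔
      ∃ b : Fin n → Finset X, (∀ i, b i ⊆ B i) ∧ (∀ i, (b i).card = 2) ∧
        (SimpleGraph.fromRel (fun x y => ∃ i, b i = {x, y})).Colorable 2 := by
  constructor
  · rintro ⟨A, hA⟩
    have hx : ∀ i, ∃ x, x ∈ A ∩ B i := fun i => (hA i).1
    have hy : ∀ i, ∃ y, y ∈ Aᶜ ∩ B i := fun i => (hA i).2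
    choose x hx using hx
    choose y hy using hy
    have hxA : ∀ i, x i ∈ A := fun i => (mem_inter.mp (hx i)).1
    have hyA : ∀ i, y i ∉ A := fun i => mem_compl.mp (mem_inter.mp (hy i)).1
    have hne : ∀ i, x i ≠ y i := fun i h => hyA i (h ▸ hxA i)
    refine ⟨fun i => {x i, y i}, ?_, ?_, ?_⟩
    · intro i z hz
      rcases mem_insert.mp hz with h | h
      · exact h ▸ (mem_inter.mp (hx i)).2
      · exact (mem_singleton.mp h) ▸ (mem_inter.mp (hy i)).2
    · intro i; exact card_pair (hne i)
    · refine ⟨SimpleGraph.Coloring.mk (fun v => if v ∈ A then 0 else 1) ?_⟩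
      intro u v huv
      rw [SimpleGraph.fromRel_adj] at huv
      obtain ⟨hne', h⟩ := huv
      have key : ∀ i (p q : X), p ≠ q → ({x i, y i} : Finset X) = {p, q} → (p ∈ A ↔ q ∉ A) := by
        intro i p q hpq hpair
        have hu : p ∈ ({x i, y i} : Finset X) := hpair ▸ mem_insert_self p {q}
        have hv : q ∈ ({x i, y i} : Finset X) := hpair ▸ mem_insert_of_mem (mem_singleton_self q)
        have hu' : p = x i ∨ p = y i := by simpa using hu
        have hv' : q = x i ∨ q = y i := by simpa using hv
        rcases hu' with h1 | h1 <;> rcases hv' with h2 | h2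
        · exact absurd (h1.trans h2.symm) hpq
        · subst h1; subst h2
          exact ⟨fun _ => hyA i, fun _ => hxA i⟩
        · subst h1; subst h2
          exact ⟨fun hh => (hyA i hh).elim, fun hh => (hh (hxA i)).elim⟩
        · exact absurd (h1.trans h2.symm) hpq
      have hiff : (u ∈ A ↔ v ∉ A) := by
        rcases h with ⟨i, hi⟩ | ⟨i, hi⟩
        · exact key i u v hne' hi
        · have := key i v u (Ne.symm hne') hi
          by_cases hu : u ∈ A <;> by_cases hv : v ∈ A <;> tauto
      by_cases hu : u ∈ A <;> by_cases hv : v ∈ A <;> simp [hu, hv] at hiff ⊢ <;> tauto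
  · rintro ⟨b, hsub, hcard, ⟨C⟩⟩
    refine ⟨Finset.univ.filter (fun v => C v = 0), fun i => ?_⟩
    obtain ⟨u, v, huv, hb⟩ := Finset.card_eq_two.mp (hcard i)
    have hadj : (SimpleGraph.fromRel (fun x y => ∃ i, b i = {x, y})).Adj u v := by
      rw [SimpleGraph.fromRel_adj]
      exact ⟨huv, Or.inl ⟨i, hb⟩⟩
    have hC := C.valid hadj
    have huB : u ∈ B i := hsub i (hb ▸ mem_insert_self u {v})
    have hvB : v ∈ B i := hsub i (hb ▸ mem_insert_of_mem (mem_singleton_self v))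
    have hfin : ∀ a : Fin 2, a = 0 ∨ a = 1 := by decide
    rcases hfin (C u) with h0 | h1
    · have hv1 : C v = 1 := (hfin (C v)).resolve_left (fun h => hC (h0.trans h.symm))
      exact ⟨⟨u, mem_inter.mpr ⟨mem_filter.mpr ⟨mem_univ u, h0⟩, huB⟩⟩,
        ⟨v, mem_inter.mpr ⟨mem_compl.mpr (fun h => by simp [hv1] at h), hvB⟩⟩⟩
    · have hv0 : C v = 0 := (hfin (C v)).resolve_right (fun h => hC (h1.trans h.symm))
      exact ⟨⟨v, mem_inter.mpr ⟨mem_filter.mpr ⟨mem_univ v, hv0⟩, hvB⟩⟩,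
        ⟨u, mem_inter.mpr ⟨mem_compl.mpr (fun h => by simp [h1] at h), huB⟩⟩⟩
end

section
/- If F is a separating family on a finite set X and F' = {A △ B : A, B ∈ F} is the family of all symmetric differences of pairs of members of F, then F ∪ F' is a 2-separating family on X. -/
open Finset

/-- `F` is a separating family if every `B` with `|B| ≥ 2` is separated by some member of `F`. -/
def SeparatingFamily {X : Type*} [Fintype X] [DecidableEq X] (F : Finset (Finset X)) : Prop :=
  ∀ B : Finset X, 2 ≤ B.card → ∃ A ∈ F, Separates A B

/-- `F` is `n`-separating if every separable collection `B₁, …, Bₙ` is simultaneously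
separated by some member of `F`. -/
def NSeparating {X : Type*} [Fintype X] [DecidableEq X] (n : ℕ) (F : Finset (Finset X)) : Prop :=
  ∀ B : Fin n → Finset X, (∃ A : Finset X, ∀ i, Separates A (B i)) →
    ∃ A ∈ F, ∀ i, Separates A (B i)

lemma sep_card_two {X : Type*} [Fintype X] [DecidableEq X] {A B : Finset X}
    (h : Separates A B) : 2 ≤ B.card := by
  obtain ⟨⟨x, hx⟩, ⟨y, hy⟩⟩ := h
  simp only [Finset.mem_inter, Finset.mem_compl] at hx hy
  rw [show (2 : ℕ) = 1 + 1 from rfl, Nat.add_one_le_iff, Finset.one_lt_card]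
  exact ⟨x, hx.2, y, hy.2, fun h => hy.1 (h ▸ hx.1)⟩

lemma sep_symmDiff {X : Type*} [Fintype X] [DecidableEq X] {A₁ A₂ B : Finset X}
    (h1 : Separates A₁ B) (h2 : ¬ Separates A₂ B) : Separates (symmDiff A₁ A₂) B := by
  obtain ⟨⟨x, hx⟩, ⟨y, hy⟩⟩ := h1
  simp only [Finset.mem_inter, Finset.mem_compl] at hx hy
  rw [Separates, not_and_or, Finset.not_nonempty_iff_eq_empty,
    Finset.not_nonempty_iff_eq_empty] at h2
  rcases h2 with h2 | h2
  · -- B ∩ A₂ = ∅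
    have hx2 : x ∉ A₂ := fun h => (Finset.eq_empty_iff_forall_notMem.1 h2 x)
      (Finset.mem_inter.2 ⟨h, hx.2⟩)
    have hy2 : y ∉ A₂ := fun h => (Finset.eq_empty_iff_forall_notMem.1 h2 y)
      (Finset.mem_inter.2 ⟨h, hy.2⟩)
    constructor
    · exact ⟨x, Finset.mem_inter.2 ⟨Finset.mem_symmDiff.2 (Or.inl ⟨hx.1, hx2⟩), hx.2⟩⟩
    · refine ⟨y, Finset.mem_inter.2 ⟨Finset.mem_compl.2 ?_, hy.2⟩⟩
      rw [Finset.mem_symmDiff]; tauto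
  · -- B ⊆ A₂
    have hx2 : x ∈ A₂ := by
      by_contra h
      exact (Finset.eq_empty_iff_forall_notMem.1 h2 x)
        (Finset.mem_inter.2 ⟨Finset.mem_compl.2 h, hx.2⟩)
    have hy2 : y ∈ A₂ := by
      by_contra h
      exact (Finset.eq_empty_iff_forall_notMem.1 h2 y)
        (Finset.mem_inter.2 ⟨Finset.mem_compl.2 h, hy.2⟩)
    constructor
    · exact ⟨y, Finset.mem_inter.2 ⟨Finset.mem_symmDiff.2 (Or.inr ⟨hy2, hy.1⟩), hy.2⟩⟩
    · refine ⟨x, Finset.mem_inter.2 ⟨Finset.mem_compl.2 ?_, hx.2⟩⟩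
      rw [Finset.mem_symmDiff]; tauto

theorem stmt_4 {X : Type*} [Fintype X] [DecidableEq X] (F : Finset (Finset X))
    (hF : SeparatingFamily F) :
    NSeparating 2 (F ∪ (F ×ˢ F).image (fun p => symmDiff p.1 p.2)) := by
  intro B ⟨A, hA⟩
  obtain ⟨A₁, hA₁F, hA₁⟩ := hF (B 0) (sep_card_two (hA 0))
  obtain ⟨A₂, hA₂F, hA₂⟩ := hF (B 1) (sep_card_two (hA 1))
  by_cases h1 : Separates A₁ (B 1)
  · refine ⟨A₁, Finset.mem_union_left _ hA₁F, fun i => ?_⟩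
    fin_cases i <;> assumption
  · by_cases h2 : Separates A₂ (B 0)
    · refine ⟨A₂, Finset.mem_union_left _ hA₂F, fun i => ?_⟩
      fin_cases i <;> assumption
    · refine ⟨symmDiff A₁ A₂, Finset.mem_union_right _ ?_, fun i => ?_⟩
      · exact Finset.mem_image.2 ⟨(A₁, A₂), Finset.mem_product.2 ⟨hA₁F, hA₂F⟩, rfl⟩
      · fin_cases i
        · exact sep_symmDiff hA₁ h2
        · rw [symmDiff_comm]; exact sep_symmDiff hA₂ h1
end

section
/- Let n ≥ 1, k ≥ n + 1, and let F be an n-separating family of subsets of [k]. Then for all distinct i, j ∈ [k], the number of sets A ∈ F containing exactly one of i and j is at least 2^{n−1} (i.e., the matrix representation of F is a Hamming 2^{n−1}-code: its columns have pairwise Hamming distance at least 2^{n−1}). -/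
open Finset

lemma sep_pair {k : ℕ} (A : Finset (Fin k)) (x y : Fin k) :
    Separates A {x, y} ↔ ((x ∈ A ∧ y ∉ A) ∨ (y ∈ A ∧ x ∉ A)) := by
  unfold Separates
  simp only [Finset.Nonempty, Finset.mem_inter, Finset.mem_compl, Finset.mem_insert,
    Finset.mem_singleton]
  constructor
  · rintro ⟨⟨a, ha, rfl | rfl⟩, ⟨b, hb, rfl | rfl⟩⟩ <;> tauto
  · rintro (⟨h1, h2⟩ | ⟨h1, h2⟩)
    · exact ⟨⟨x, h1, Or.inl rfl⟩, ⟨y, h2, Or.inr rfl⟩⟩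
    · exact ⟨⟨y, h1, Or.inr rfl⟩, ⟨x, h2, Or.inl rfl⟩⟩

theorem stmt_5 (n k : ℕ) (hn : 1 ≤ n) (hk : n + 1 ≤ k) (F : Finset (Finset (Fin k)))
    (hF : NSeparating n F) :
    ∀ i j : Fin k, i ≠ j →
      2 ^ (n - 1) ≤ (F.filter (fun A => (i ∈ A ∧ j ∉ A) ∨ (j ∈ A ∧ i ∉ A))).card := by
  intro i j hij
  by_contra hlt
  push_neg at hlt
  set S := F.filter (fun A => (i ∈ A ∧ j ∉ A) ∨ (j ∈ A ∧ i ∉ A)) with hS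
  -- fresh vertices
  obtain ⟨T, hTsub, hTcard⟩ : ∃ T ⊆ (Finset.univ \ {i, j} : Finset (Fin k)), T.card = n - 1 := by
    apply Finset.exists_subset_card_eq
    rw [Finset.card_sdiff_of_subset (Finset.subset_univ _), Finset.card_univ, Fintype.card_fin]
    have h2 : ({i, j} : Finset (Fin k)).card = 2 := by
      rw [Finset.card_insert_of_notMem (by simpa using hij), Finset.card_singleton]
    omega
  let v : Fin (n - 1) → Fin k := fun t => (T.equivFin.symm (Fin.cast hTcard.symm t) : Fin k)
  have hvmem : ∀ t, v t ∈ T := fun t => (T.equivFin.symm (Fin.cast hTcard.symm t)).2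
  have hvinj : Function.Injective v := by
    intro a b hab
    have := Subtype.ext hab
    have := T.equivFin.symm.injective this
    simpa [Fin.ext_iff] using this
  have hvne : ∀ t, v t ≠ i ∧ v t ≠ j := by
    intro t
    have := hTsub (hvmem t)
    simp only [Finset.mem_sdiff, Finset.mem_insert, Finset.mem_singleton] at this
    tauto
  -- signatures and pigeonhole
  let σ : Finset (Fin k) → Fin (n - 1) → Bool := fun A t => decide (v t ∈ A ↔ i ∈ A)
  obtain ⟨c, hc⟩ : ∃ c : Fin (n - 1) → Bool, c ∉ S.image (fun A t => !(σ A t)) := by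
    by_contra h
    push_neg at h
    have hsub : (Finset.univ : Finset (Fin (n - 1) → Bool)) ⊆
        S.image (fun A t => !(σ A t)) := fun c _ => h c
    have h1 := Finset.card_le_card hsub
    have h2 := Finset.card_image_le (s := S) (f := fun A t => !(σ A t))
    rw [Finset.card_univ] at h1
    have h3 : Fintype.card (Fin (n - 1) → Bool) = 2 ^ (n - 1) := by
      simp [Fintype.card_fun]
    omega
  -- the collection
  let pairAt : Fin (n - 1) → Finset (Fin k) := fun t => {if c t then i else j, v t}
  let B : Fin n → Finset (Fin k) := fun m =>
    if h : (m : ℕ) = 0 then {i, j} else pairAt ⟨(m : ℕ) - 1, by omega⟩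
  -- it is separable
  have hsep : ∃ A : Finset (Fin k), ∀ m, Separates A (B m) := by
    refine ⟨insert i ((Finset.univ.filter (fun t => c t = false)).image v), ?_⟩
    intro m
    have hjni : j ∉ insert i ((Finset.univ.filter (fun t => c t = false)).image v) := by
      simp only [Finset.mem_insert, Finset.mem_image, Finset.mem_filter]
      push_neg
      exact ⟨hij.symm, fun t _ => (hvne t).2⟩
    by_cases h : (m : ℕ) = 0
    · have : B m = {i, j} := by simp [B, h]
      rw [this, sep_pair]
      exact Or.inl ⟨Finset.mem_insert_self _ _, hjni⟩
    · have : B m = pairAt ⟨(m : ℕ) - 1, by omega⟩ := by simp [B, h]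
      rw [this]
      set t : Fin (n - 1) := ⟨(m : ℕ) - 1, by omega⟩
      rw [sep_pair]
      by_cases hct : c t = true
      · refine Or.inl ⟨?_, ?_⟩
        · simp [hct, Finset.mem_insert_self]
        · simp only [Finset.mem_insert, Finset.mem_image, Finset.mem_filter]
          push_neg
          refine ⟨(hvne t).1, ?_⟩
          rintro t' ⟨-, hcf⟩ heq
          rw [hvinj heq] at hcf
          simp [hct] at hcf
      · refine Or.inr ⟨?_, ?_⟩
        · have hcf : c t = false := by simpa using hct
          exact Finset.mem_insert_of_mem (Finset.mem_image_of_mem v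
            (Finset.mem_filter.mpr ⟨Finset.mem_univ _, hcf⟩))
        · have hcf : c t = false := by simpa using hct
          rw [if_neg (by simp [hcf])]; exact hjni
  obtain ⟨A, hAF, hAsep⟩ := hF B hsep
  -- A is in S
  have hAS : A ∈ S := by
    have h0 := hAsep ⟨0, by omega⟩
    have : B ⟨0, by omega⟩ = {i, j} := by simp [B]
    rw [this, sep_pair] at h0
    exact Finset.mem_filter.mpr ⟨hAF, h0⟩
  -- A is exactly-one on {i,j}
  have hAij : (i ∈ A ∧ j ∉ A) ∨ (j ∈ A ∧ i ∉ A) := (Finset.mem_filter.mp hAS).2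
  -- but some pair kills A
  have hne : (fun t => !(σ A t)) ≠ c := fun h => hc (h ▸ Finset.mem_image_of_mem _ hAS)
  obtain ⟨t, ht⟩ : ∃ t, (!(σ A t)) ≠ c t := by
    by_contra h
    push_neg at h
    exact hne (funext h)
  have hkill : c t = σ A t := by
    cases hb : σ A t <;> cases hb' : c t <;> simp_all
  have hm := hAsep ⟨(t : ℕ) + 1, by omega⟩
  have hB : B ⟨(t : ℕ) + 1, by omega⟩ = pairAt t := by
    simp only [B]
    rw [dif_neg (by simp)]
    congr 1
  rw [hB, sep_pair] at hm
  by_cases hs : σ A t = true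
  · -- v t ∈ A ↔ i ∈ A, and pair is {i, v t}
    have hiff : v t ∈ A ↔ i ∈ A := by simpa [σ] using hs
    have hct : c t = true := hkill.trans hs
    simp only [pairAt, hct, if_pos] at hm
    tauto
  · have hiff : ¬ (v t ∈ A ↔ i ∈ A) := by simpa [σ] using hs
    have hct : c t = false := by rw [hkill]; simpa using hs
    simp only [hct] at hm
    simp only [Bool.false_eq_true, if_false] at hm
    -- j ∈ A ↔ ¬ i ∈ A, and v t ∈ A ↔ ¬ i ∈ A, so j, v t same side
    rcases hAij with ⟨hi, hj⟩ | ⟨hj, hi⟩ <;> tauto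
end

section
/- Let n ≥ 1 and let b₁, …, bₙ ⊆ [k] be a separable collection of two-element subsets of [k]. Then the number of subsets A ⊆ [k] that simultaneously separate every bᵢ is at least 2^{k−n} (equivalently, a uniformly random subset of [k] separates the collection with probability at least 2^{−n}). -/
open Finset

instance {X : Type*} [Fintype X] [DecidableEq X] (A B : Finset X) :
    Decidable (Separates A B) := by
  unfold Separates; infer_instance

/-!
Identify a subset `A ⊆ X` with its indicator vector in `(ZMod 2)^X`. A two-element set `B` is
separated by `A` exactly when `∑ x ∈ B, 1_A x = 1`, so the subsets separating every `bᵢ` form a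
fibre of the additive map `v ↦ (∑ x ∈ bᵢ, v x)ᵢ` from `(ZMod 2)^k` to `(ZMod 2)^n`. A nonempty
fibre is a coset of the kernel, and the kernel has at least `2^k / 2^n` elements.
-/

theorem AddMonoidHom.card_le_card_mul_card_fiber {G H : Type*} [AddGroup G] [AddGroup H]
    [Finite G] [Finite H] (f : G →+ H) (a : G) :
    Nat.card G ≤ Nat.card H * Nat.card (f ⁻¹' {f a}) := by
  rw [Nat.card_congr (f.fiberEquivKer a), ← f.ker.card_mul_index, AddSubgroup.index_ker, mul_comm]
  exact Nat.mul_le_mul_right _ (Nat.card_le_card_of_injective _ Subtype.val_injective)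

theorem Nat.pow_sub_le_of_le_mul {a m n c : ℕ} (ha : 0 < a) (hc : 0 < c) (h : a ^ m ≤ a ^ n * c) :
    a ^ (m - n) ≤ c := by
  rcases le_total m n with hmn | hnm
  · simpa [Nat.sub_eq_zero_of_le hmn, Nat.one_le_iff_ne_zero] using hc.ne'
  · refine Nat.le_of_mul_le_mul_left ?_ (Nat.pow_pos ha (n := n))
    rwa [← pow_add, Nat.add_sub_cancel' hnm]

section Separation

variable {X ι : Type*} [Fintype X] [DecidableEq X]

def indicatorEquiv : Finset X ≃ (X → ZMod 2) where
  toFun A x := if x ∈ A then 1 else 0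
  invFun v := univ.filter (fun x => v x = 1)
  left_inv A := by ext x; by_cases hx : x ∈ A <;> simp [hx]
  right_inv v := by
    funext x
    rcases (by decide : ∀ z : ZMod 2, z = 0 ∨ z = 1) (v x) with hx | hx <;> simp [hx]

@[simp]
theorem indicatorEquiv_apply (A : Finset X) (x : X) :
    indicatorEquiv A x = if x ∈ A then 1 else 0 := rfl

theorem separates_pair_iff {A : Finset X} {x y : X} :
    Separates A {x, y} ↔ (x ∈ A ∨ y ∈ A) ∧ (x ∉ A ∨ y ∉ A) := by
  simp [Separates, Finset.Nonempty, and_or_left, exists_or]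

theorem separates_iff_sum_indicator {A B : Finset X} (hB : #B = 2) :
    Separates A B ↔ ∑ x ∈ B, indicatorEquiv A x = 1 := by
  obtain ⟨x, y, hxy, rfl⟩ := card_eq_two.mp hB
  rw [separates_pair_iff, sum_pair hxy]
  by_cases hx : x ∈ A <;> by_cases hy : y ∈ A <;> simp [hx, hy]

def parityHom (b : ι → Finset X) : (X → ZMod 2) →+ (ι → ZMod 2) where
  toFun v i := ∑ x ∈ b i, v x
  map_zero' := by ext; simp
  map_add' v w := by ext; simp [sum_add_distrib]

theorem forall_separates_iff_parityHom {b : ι → Finset X} (hb : ∀ i, #(b i) = 2)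
    (A : Finset X) :
    (∀ i, Separates A (b i)) ↔ parityHom b (indicatorEquiv A) = 1 := by
  simp only [separates_iff_sum_indicator (hb _), funext_iff]
  rfl

end Separation

theorem stmt_8_general (n k : ℕ) (b : Fin n → Finset (Fin k))
    (hb : ∀ i, (b i).card = 2)
    (hsep : ∃ A : Finset (Fin k), ∀ i, Separates A (b i)) :
    2 ^ (k - n) ≤
      (Finset.univ.filter (fun A : Finset (Fin k) => ∀ i, Separates A (b i))).card := by
  obtain ⟨A₀, hA₀⟩ := hsep
  set f := parityHom b
  have hcount : #(univ.filter fun A : Finset (Fin k) => ∀ i, Separates A (b i)) =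
      Nat.card (f ⁻¹' {f (indicatorEquiv A₀)}) := by
    rw [(forall_separates_iff_parityHom hb A₀).mp hA₀, ← Fintype.card_subtype,
      ← Nat.card_eq_fintype_card]
    exact Nat.card_congr (indicatorEquiv.subtypeEquiv (forall_separates_iff_parityHom hb))
  have hcard := f.card_le_card_mul_card_fiber (indicatorEquiv A₀)
  simp only [Nat.card_eq_fintype_card, Fintype.card_pi, Fintype.card_fin, ZMod.card,
    prod_const, card_univ] at hcard
  rw [hcount]
  exact Nat.pow_sub_le_of_le_mul two_pos (Nat.card_pos_iff.mpr ⟨⟨_, rfl⟩, inferInstance⟩) hcard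

theorem stmt_8 (n k : ℕ) (hn : 1 ≤ n) (b : Fin n → Finset (Fin k))
    (hb : ∀ i, (b i).card = 2)
    (hsep : ∃ A : Finset (Fin k), ∀ i, Separates A (b i)) :
    2 ^ (k - n) ≤
      (Finset.univ.filter (fun A : Finset (Fin k) => ∀ i, Separates A (b i))).card :=
  stmt_8_general n k b hb hsep
end

section
/- For all n ≥ 1 and k ≥ 2, there exists an n-separating family F of subsets of [k] with |F| ≤ 2n·log₂ k / (−log₂(1 − 2^{−n})) + 1. -/
open Finset

/-!
Encode a set `A ⊆ X` by its indicator `c : X → ZMod 2`. Choosing `xᵢ ∈ Bᵢ ∩ A₀` and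
`yᵢ ∈ Bᵢ ∖ A₀` from a separating set `A₀`, any `c` with `c xᵢ ≠ c yᵢ` for all `i` separates
every `Bᵢ`. These conditions say that the linear map `c ↦ (c xᵢ + c yᵢ)ᵢ` into `(ZMod 2)ⁿ`
takes the value `1`, so, the fibre being nonempty, at least a `2⁻ⁿ` fraction of all `c` satisfy
them. Hence `m` independent uniform `c` all fail for a fixed choice of the `2n` points with
probability at most `(1 - 2⁻ⁿ)ᵐ`, and a union bound over the at most `k²ⁿ` choices leaves a
family of `m` sets that works as soon as `k²ⁿ (1 - 2⁻ⁿ)ᵐ < 1`.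
-/

theorem AddMonoidHom.card_le_card_mul_card_fiber_s9 {G H : Type*} [AddGroup G] [Fintype G]
    [AddMonoid H] [Fintype H] [DecidableEq H] (f : G →+ H) {y : H} (hy : y ∈ Set.range f) :
    Fintype.card G ≤ Fintype.card H * #{g | f g = y} := by
  rw [mul_comm]
  calc Fintype.card G ≤ #{g | f g = y} * #(univ.image f) :=
        card_le_mul_card_image univ _ fun b hb =>
          (card_fiber_eq_of_mem_range f (by simpa using hb) hy).le
    _ ≤ #{g | f g = y} * Fintype.card H := Nat.mul_le_mul_left _ (card_le_univ _)

def Cuts {ι X : Type*} (c : X → ZMod 2) (x y : ι → X) : Prop :=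
  ∀ i, c (x i) ≠ c (y i)

instance {ι X : Type*} [Fintype ι] (c : X → ZMod 2) (x y : ι → X) : Decidable (Cuts c x y) :=
  Fintype.decidableForallFintype

section Cuts

variable {ι X : Type*} [Fintype ι] [DecidableEq ι] [Fintype X] [DecidableEq X] {x y : ι → X}

theorem two_pow_card_le_mul_card_cuts {c₀ : X → ZMod 2} (h₀ : Cuts c₀ x y) :
    2 ^ Fintype.card X ≤ 2 ^ Fintype.card ι * #{c | Cuts c x y} := by
  let f : (X → ZMod 2) →+ (ι → ZMod 2) :=
    { toFun := fun c i => c (x i) + c (y i)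
      map_zero' := rfl
      map_add' := fun c d => funext fun i => add_add_add_comm _ _ _ _ }
  have hne : ∀ a b : ZMod 2, a ≠ b ↔ a + b = 1 := by decide
  have hcuts : ∀ c, Cuts c x y ↔ f c = 1 := fun c => by
    simp only [Cuts, hne, funext_iff]; rfl
  simp only [hcuts] at h₀ ⊢
  simpa using f.card_le_card_mul_card_fiber_s9 ⟨c₀, h₀⟩

theorem card_not_cuts_le {c₀ : X → ZMod 2} (h₀ : Cuts c₀ x y) :
    (#{c | ¬Cuts c x y} : ℝ) ≤ 2 ^ Fintype.card X * (1 - 1 / 2 ^ Fintype.card ι) := by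
  have hsplit : (#{c | Cuts c x y} : ℝ) + #{c | ¬Cuts c x y} = 2 ^ Fintype.card X := by
    exact_mod_cast (card_filter_add_card_filter_not _).trans (by simp)
  have hcount : (2 : ℝ) ^ Fintype.card X ≤ 2 ^ Fintype.card ι * #{c | Cuts c x y} := by
    exact_mod_cast two_pow_card_le_mul_card_cuts h₀
  have hgood : (2 : ℝ) ^ Fintype.card X / 2 ^ Fintype.card ι ≤ #{c | Cuts c x y} := by
    rwa [div_le_iff₀' (by positivity)]
  rw [mul_one_sub, mul_one_div]
  linarith

end Cuts

theorem exists_forall_mem_exists_of_card_mul_pow_lt {α β : Type*} [Fintype α]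
    (P : α → β → Prop) [DecidableRel P] (T : Finset β) (m : ℕ) {b : ℝ}
    (hb : ∀ p ∈ T, (#{c | ¬P c p} : ℝ) ≤ b) (hT : #T * b ^ m < (Fintype.card α : ℝ) ^ m) :
    ∃ g : Fin m → α, ∀ p ∈ T, ∃ j, P (g j) p := by
  classical
  by_contra! hfail
  have hcover : (univ : Finset (Fin m → α)) ⊆
      T.biUnion fun p => Fintype.piFinset fun _ => {c | ¬P c p} := fun g _ => by
    obtain ⟨p, hp, hg⟩ := hfail g
    exact mem_biUnion.2 ⟨p, hp, Fintype.mem_piFinset.2 fun j => by simpa using hg j⟩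
  have hcount : (Fintype.card α : ℝ) ^ m ≤ #T * b ^ m := by
    calc (Fintype.card α : ℝ) ^ m = #(univ : Finset (Fin m → α)) := by simp
      _ ≤ ∑ p ∈ T, (#(Fintype.piFinset fun _ : Fin m => {c | ¬P c p}) : ℝ) := by
        exact_mod_cast (card_le_card hcover).trans card_biUnion_le
      _ ≤ ∑ _p ∈ T, b ^ m := sum_le_sum fun p hp => by
        simpa using pow_le_pow_left₀ (by positivity) (hb p hp) m
      _ = #T * b ^ m := by rw [sum_const, nsmul_eq_mul]
  exact hT.not_ge hcount

theorem exists_card_le_forall_cuts {ι X : Type*} [Fintype ι] [DecidableEq ι] [Fintype X]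
    [DecidableEq X] (m : ℕ)
    (h : (Fintype.card X : ℝ) ^ (2 * Fintype.card ι) * (1 - 1 / 2 ^ Fintype.card ι) ^ m < 1) :
    ∃ G : Finset (X → ZMod 2), #G ≤ m ∧
      ∀ x y : ι → X, (∃ c, Cuts c x y) → ∃ c ∈ G, Cuts c x y := by
  set a : ℝ := 1 - 1 / 2 ^ Fintype.card ι
  have ha : 0 ≤ a := sub_nonneg.2 (div_le_one_of_le₀ (one_le_pow₀ one_le_two) (by positivity))
  let T : Finset ((ι → X) × (ι → X)) := {p | ∃ c, Cuts c p.1 p.2}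
  have hT : (#T : ℝ) ≤ (Fintype.card X : ℝ) ^ (2 * Fintype.card ι) := by
    have : #T ≤ Fintype.card X ^ (2 * Fintype.card ι) :=
      (card_le_univ T).trans_eq (by simp [pow_mul', sq])
    exact_mod_cast this
  have hunion : (#T : ℝ) * (2 ^ Fintype.card X * a) ^ m < (Fintype.card (X → ZMod 2) : ℝ) ^ m :=
    calc (#T : ℝ) * (2 ^ Fintype.card X * a) ^ m
        = #T * a ^ m * (2 ^ Fintype.card X) ^ m := by rw [mul_pow, mul_comm (_ ^ m), mul_assoc]
      _ ≤ (Fintype.card X : ℝ) ^ (2 * Fintype.card ι) * a ^ m * (2 ^ Fintype.card X) ^ m := by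
        gcongr
      _ < 1 * (2 ^ Fintype.card X) ^ m := by gcongr
      _ = (Fintype.card (X → ZMod 2) : ℝ) ^ m := by simp
  obtain ⟨g, hg⟩ := exists_forall_mem_exists_of_card_mul_pow_lt
    (fun c (p : (ι → X) × (ι → X)) => Cuts c p.1 p.2) T m
    (fun p hp => by obtain ⟨c₀, h₀⟩ := (mem_filter.1 hp).2; exact card_not_cuts_le h₀) hunion
  refine ⟨univ.image g, card_image_le.trans_eq (card_fin m), fun x y hxy => ?_⟩
  obtain ⟨j, hj⟩ := hg (x, y) (mem_filter.2 ⟨mem_univ _, hxy⟩)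
  exact ⟨g j, mem_image_of_mem g (mem_univ j), hj⟩

theorem separates_filter_eq_one {X : Type*} [Fintype X] [DecidableEq X] {c : X → ZMod 2}
    {B : Finset X} {u v : X} (hu : u ∈ B) (hv : v ∈ B) (huv : c u ≠ c v) :
    Separates {w | c w = 1} B := by
  have hcases : ∀ a b : ZMod 2, a ≠ b → a = 1 ∧ b ≠ 1 ∨ a ≠ 1 ∧ b = 1 := by decide
  rcases hcases _ _ huv with ⟨hu1, hv1⟩ | ⟨hu1, hv1⟩
  · exact ⟨⟨u, by simp [hu, hu1]⟩, ⟨v, by simp [hv, hv1]⟩⟩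
  · exact ⟨⟨v, by simp [hv, hv1]⟩, ⟨u, by simp [hu, hu1]⟩⟩

theorem nSeparating_image_of_forall_cuts {X : Type*} [Fintype X] [DecidableEq X] {n : ℕ}
    {G : Finset (X → ZMod 2)}
    (hG : ∀ x y : Fin n → X, (∃ c, Cuts c x y) → ∃ c ∈ G, Cuts c x y) :
    NSeparating n (G.image fun c => ({w | c w = 1} : Finset X)) := by
  rintro B ⟨A₀, hA₀⟩
  choose x hx using fun i => (hA₀ i).1
  choose y hy using fun i => (hA₀ i).2
  have hxy : Cuts (fun w => if w ∈ A₀ then 1 else 0) x y := fun i => by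
    simp [(mem_inter.1 (hx i)).1, mem_compl.1 (mem_inter.1 (hy i)).1]
  obtain ⟨c, hc, hcuts⟩ := hG x y ⟨_, hxy⟩
  exact ⟨_, mem_image_of_mem _ hc, fun i =>
    separates_filter_eq_one (mem_inter.1 (hx i)).2 (mem_inter.1 (hy i)).2 (hcuts i)⟩

theorem mul_pow_lt_one_of_logb_div_lt {K a : ℝ} {m : ℕ} (ha₀ : 0 ≤ a) (ha₁ : a < 1)
    (hm : Real.logb 2 K / -Real.logb 2 a < m) : K * a ^ m < 1 := by
  rcases le_or_gt K 0 with hK | hK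
  · exact (mul_nonpos_of_nonpos_of_nonneg hK (by positivity)).trans_lt one_pos
  rcases ha₀.eq_or_lt with rfl | ha
  · simp only [Real.logb_zero, neg_zero, div_zero, Nat.cast_pos] at hm
    simp [zero_pow hm.ne']
  have hlog : Real.logb 2 K < m * -Real.logb 2 a :=
    (div_lt_iff₀ (neg_pos.2 (Real.logb_neg one_lt_two ha ha₁))).1 hm
  rw [← Real.logb_neg_iff one_lt_two (by positivity),
    Real.logb_mul hK.ne' (by positivity), Real.logb_pow]
  linarith

theorem stmt_9_general (n k : ℕ) :
    ∃ F : Finset (Finset (Fin k)), NSeparating n F ∧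
      (F.card : ℝ) ≤
        2 * n * Real.logb 2 k / (-Real.logb 2 (1 - 1 / 2 ^ n)) + 1 := by
  set a : ℝ := 1 - 1 / 2 ^ n
  have ha₀ : 0 ≤ a := sub_nonneg.2 (div_le_one_of_le₀ (one_le_pow₀ one_le_two) (by positivity))
  have ha₁ : a < 1 := sub_lt_self 1 (by positivity)
  set R : ℝ := 2 * n * Real.logb 2 k / (-Real.logb 2 a)
  have hR : 0 ≤ R := div_nonneg
    (by have := Real.log_natCast_nonneg k; unfold Real.logb; positivity)
    (neg_nonneg.2 (Real.logb_nonpos one_lt_two ha₀ ha₁.le))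
  have hkey : ((k : ℝ) ^ (2 * n)) * a ^ (⌊R⌋₊ + 1) < 1 :=
    mul_pow_lt_one_of_logb_div_lt ha₀ ha₁ (by
      rw [Real.logb_pow]; push_cast; exact Nat.lt_floor_add_one R)
  obtain ⟨G, hGcard, hG⟩ :=
    exists_card_le_forall_cuts (ι := Fin n) (X := Fin k) (⌊R⌋₊ + 1)
      (by simpa only [Fintype.card_fin] using hkey)
  refine ⟨_, nSeparating_image_of_forall_cuts hG, ?_⟩
  calc (#(G.image _) : ℝ) ≤ #G := by exact_mod_cast card_image_le
    _ ≤ ⌊R⌋₊ + 1 := by exact_mod_cast hGcard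
    _ ≤ R + 1 := by gcongr; exact Nat.floor_le hR

theorem stmt_9 (n k : ℕ) (hn : 1 ≤ n) (hk : 2 ≤ k) :
    ∃ F : Finset (Finset (Fin k)), NSeparating n F ∧
      (F.card : ℝ) ≤
        2 * n * Real.logb 2 k / (-Real.logb 2 (1 - 1 / 2 ^ n)) + 1 :=
  stmt_9_general n k
end

section
/- If F is an (n,n)-separating family of subsets of a finite set X, then F is n-separating. -/
open Finset

/-- `F` is `(i,j)`-separating if all disjoint pairs `P, Q` with `|P| ≤ i`, `|Q| ≤ j`
are separated in the strong sense by some member of `F`. -/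
def IJSeparating {X : Type*} [Fintype X] [DecidableEq X] (i j : ℕ)
    (F : Finset (Finset X)) : Prop :=
  ∀ P Q : Finset X, P.card ≤ i → Q.card ≤ j → P ∩ Q = ∅ →
    ∃ A ∈ F, (P ⊆ A ∧ Q ∩ A = ∅) ∨ (Q ⊆ A ∧ P ∩ A = ∅)

theorem stmt_10 {X : Type*} [Fintype X] [DecidableEq X] (n : ℕ) (F : Finset (Finset X))
    (hF : IJSeparating n n F) : NSeparating n F := by
  intro B hB
  obtain ⟨A, hA⟩ := hB
  choose p hp using fun i => (hA i).1
  choose q hq using fun i => (hA i).2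
  set P : Finset X := Finset.image p Finset.univ with hP
  set Q : Finset X := Finset.image q Finset.univ with hQ
  have hPA : ∀ x ∈ P, x ∈ A := by
    intro x hx
    simp only [hP, mem_image, mem_univ, true_and] at hx
    obtain ⟨i, rfl⟩ := hx
    exact (mem_inter.mp (hp i)).1
  have hQA : ∀ x ∈ Q, x ∉ A := by
    intro x hx
    simp only [hQ, mem_image, mem_univ, true_and] at hx
    obtain ⟨i, rfl⟩ := hx
    exact mem_compl.mp (mem_inter.mp (hq i)).1
  have hdisj : P ∩ Q = ∅ := by
    ext x
    simp only [mem_inter, notMem_empty, iff_false]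
    rintro ⟨hxP, hxQ⟩
    exact hQA x hxQ (hPA x hxP)
  have hPc : P.card ≤ n := le_trans (card_image_le) (by simp)
  have hQc : Q.card ≤ n := le_trans (card_image_le) (by simp)
  obtain ⟨A', hA'F, hcase⟩ := hF P Q hPc hQc hdisj
  refine ⟨A', hA'F, fun i => ?_⟩
  have hpP : p i ∈ P := mem_image_of_mem p (mem_univ i)
  have hqQ : q i ∈ Q := mem_image_of_mem q (mem_univ i)
  have hpB : p i ∈ B i := (mem_inter.mp (hp i)).2
  have hqB : q i ∈ B i := (mem_inter.mp (hq i)).2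
  rcases hcase with ⟨hPsub, hQint⟩ | ⟨hQsub, hPint⟩
  · constructor
    · exact ⟨p i, mem_inter.mpr ⟨hPsub hpP, hpB⟩⟩
    · refine ⟨q i, mem_inter.mpr ⟨mem_compl.mpr fun h => ?_, hqB⟩⟩
      exact (notMem_empty _) (hQint ▸ mem_inter.mpr ⟨hqQ, h⟩)
  · constructor
    · exact ⟨q i, mem_inter.mpr ⟨hQsub hqQ, hqB⟩⟩
    · refine ⟨p i, mem_inter.mpr ⟨mem_compl.mpr fun h => ?_, hpB⟩⟩
      exact (notMem_empty _) (hPint ▸ mem_inter.mpr ⟨hpP, h⟩)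
end

section
/- Let n ≥ 2, k ≥ 2n, and let B, B' ⊆ [k] be disjoint sets with |B| = |B'| = n. Then the family F = {A ⊆ [k] : 1 ≤ |A| ≤ n} ∖ {B, B'} is n-separating but not (n,n)-separating. -/
open Finset

theorem stmt_12 (n k : ℕ) (hn : 2 ≤ n) (hk : 2 * n ≤ k)
    (B B' : Finset (Fin k)) (hd : Disjoint B B') (hB : B.card = n) (hB' : B'.card = n) :
    NSeparating n
      ((Finset.univ.filter (fun A : Finset (Fin k) => 1 ≤ A.card ∧ A.card ≤ n)) \ {B, B'}) ∧
    ¬ IJSeparating n n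
      ((Finset.univ.filter (fun A : Finset (Fin k) => 1 ≤ A.card ∧ A.card ≤ n)) \ {B, B'}) := by
  have hmem : ∀ C : Finset (Fin k), 1 ≤ C.card → C.card ≤ n → C ≠ B → C ≠ B' →
      C ∈ ((Finset.univ.filter (fun A : Finset (Fin k) => 1 ≤ A.card ∧ A.card ≤ n)) \ {B, B'}) := by
    intro C h1 h2 h3 h4
    simp only [mem_sdiff, mem_filter, mem_univ, true_and, mem_insert, mem_singleton]
    exact ⟨⟨h1, h2⟩, by tauto⟩
  constructor
  · intro Bs hsep
    obtain ⟨A, hA⟩ := hsep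
    choose a haa using fun i => (hA i).1
    choose b hbb using fun i => (hA i).2
    have haA : ∀ i, a i ∈ A := fun i => (mem_inter.mp (haa i)).1
    have haB : ∀ i, a i ∈ Bs i := fun i => (mem_inter.mp (haa i)).2
    have hbA : ∀ i, b i ∉ A := fun i => mem_compl.mp (mem_inter.mp (hbb i)).1
    have hbB : ∀ i, b i ∈ Bs i := fun i => (mem_inter.mp (hbb i)).2
    have hab : ∀ i j, a i ≠ b j := fun i j h => hbA j (h ▸ haA i)
    have hnpos : 0 < n := by omega
    set S := Finset.image a Finset.univ with hSdef
    set T := Finset.image b Finset.univ with hTdef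
    have hSsub : ∀ x ∈ S, x ∈ A := by
      intro x hx; obtain ⟨i, _, rfl⟩ := mem_image.mp hx; exact haA i
    have hTsub : ∀ x ∈ T, x ∉ A := by
      intro x hx; obtain ⟨i, _, rfl⟩ := mem_image.mp hx; exact hbA i
    have hScard : S.card ≤ n := le_trans (card_image_le) (by simp)
    have hTcard : T.card ≤ n := le_trans (card_image_le) (by simp)
    have hS1 : 1 ≤ S.card := Finset.card_pos.mpr ⟨a ⟨0, hnpos⟩, mem_image_of_mem a (mem_univ _)⟩
    have hT1 : 1 ≤ T.card := Finset.card_pos.mpr ⟨b ⟨0, hnpos⟩, mem_image_of_mem b (mem_univ _)⟩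
    have hSsep : ∀ i, Separates S (Bs i) := by
      intro i
      refine ⟨⟨a i, mem_inter.mpr ⟨mem_image_of_mem a (mem_univ i), haB i⟩⟩,
        ⟨b i, mem_inter.mpr ⟨mem_compl.mpr ?_, hbB i⟩⟩⟩
      exact fun h => hbA i (hSsub _ h)
    have hTsep : ∀ i, Separates T (Bs i) := by
      intro i
      refine ⟨⟨b i, mem_inter.mpr ⟨mem_image_of_mem b (mem_univ i), hbB i⟩⟩,
        ⟨a i, mem_inter.mpr ⟨mem_compl.mpr ?_, haB i⟩⟩⟩
      exact fun h => hTsub _ h (haA i)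
    by_cases hSB : S ≠ B ∧ S ≠ B'
    · exact ⟨S, hmem S hS1 hScard hSB.1 hSB.2, hSsep⟩
    by_cases hTB : T ≠ B ∧ T ≠ B'
    · exact ⟨T, hmem T hT1 hTcard hTB.1 hTB.2, hTsep⟩
    -- Now S ∈ {B, B'} and T ∈ {B, B'}, and S ≠ T.
    push_neg at hSB hTB
    have hSmem : S = B ∨ S = B' := by tauto
    have hTmem : T = B ∨ T = B' := by tauto
    have hST : S ≠ T := by
      intro h
      exact hTsub (a ⟨0, hnpos⟩) (h ▸ mem_image_of_mem a (mem_univ _)) (haA _)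
    have hScardn : S.card = n := by rcases hSmem with h | h <;> rw [h] <;> assumption
    have hTcardn : T.card = n := by rcases hTmem with h | h <;> rw [h] <;> assumption
    have hainj : Function.Injective a := by
      have : (Finset.univ.image a).card = (Finset.univ : Finset (Fin n)).card := by
        simp [← hSdef, hScardn]
      have h2 := Finset.card_image_iff.mp this
      intro i j hij
      exact h2 (mem_coe.mpr (mem_univ i)) (mem_coe.mpr (mem_univ j)) hij
    have hbinj : Function.Injective b := by
      have : (Finset.univ.image b).card = (Finset.univ : Finset (Fin n)).card := by simp [← hTdef, hTcardn]
      have h2 := Finset.card_image_iff.mp this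
      intro i j hij
      exact h2 (mem_coe.mpr (mem_univ i)) (mem_coe.mpr (mem_univ j)) hij
    set i0 : Fin n := ⟨0, hnpos⟩ with hi0
    set i1 : Fin n := ⟨1, by omega⟩ with hi1
    have hi01 : i0 ≠ i1 := by simp [hi0, hi1, Fin.ext_iff]
    set S' := insert (b i0) (S.erase (a i0)) with hS'def
    have ha0S : a i0 ∈ S := mem_image_of_mem a (mem_univ _)
    have hS'card : S'.card ≤ n := by
      calc S'.card ≤ (S.erase (a i0)).card + 1 := card_insert_le _ _
        _ = S.card - 1 + 1 := by rw [card_erase_of_mem ha0S]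
        _ ≤ n := by omega
    have hS'1 : 1 ≤ S'.card := card_pos.mpr ⟨b i0, mem_insert_self _ _⟩
    have ha1S' : a i1 ∈ S' := by
      apply mem_insert_of_mem
      exact mem_erase.mpr ⟨fun h => hi01 (hainj h.symm), mem_image_of_mem a (mem_univ _)⟩
    have hb0S' : b i0 ∈ S' := mem_insert_self _ _
    have hS'sep : ∀ i, Separates S' (Bs i) := by
      intro i
      by_cases hi : i = i0
      · subst hi
        refine ⟨⟨b i0, mem_inter.mpr ⟨hb0S', hbB i0⟩⟩,
          ⟨a i0, mem_inter.mpr ⟨mem_compl.mpr ?_, haB i0⟩⟩⟩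
        intro h
        rcases mem_insert.mp h with h | h
        · exact hab i0 i0 h
        · exact (notMem_erase _ _) h
      · refine ⟨⟨a i, mem_inter.mpr ⟨mem_insert_of_mem
          (mem_erase.mpr ⟨fun h => hi (hainj h), mem_image_of_mem a (mem_univ _)⟩), haB i⟩⟩,
          ⟨b i, mem_inter.mpr ⟨mem_compl.mpr ?_, hbB i⟩⟩⟩
        intro h
        rcases mem_insert.mp h with h | h
        · exact hi (hbinj h)
        · exact hbA i (hSsub _ (mem_of_mem_erase h))
    -- finally, S' ∉ {B, B'}
    have hdisj : ∀ x, x ∈ B → x ∉ B' := fun x hx hx' =>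
      (Finset.disjoint_left.mp hd) hx hx'
    have hb0T : b i0 ∈ T := mem_image_of_mem b (mem_univ _)
    have ha1S : a i1 ∈ S := mem_image_of_mem a (mem_univ _)
    rcases hSmem with hSeq | hSeq
    · have hTeq : T = B' := by rcases hTmem with h | h; · exact absurd (hSeq.trans h.symm) hST
                               · exact h
      refine ⟨S', hmem S' hS'1 hS'card ?_ ?_, hS'sep⟩
      · intro h; exact hdisj (b i0) (h ▸ hb0S') (hTeq ▸ hb0T)
      · intro h; exact hdisj (a i1) (hSeq ▸ ha1S) (h ▸ ha1S')
    · have hTeq : T = B := by rcases hTmem with h | h; · exact h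
                              · exact absurd (hSeq.trans h.symm) hST
      refine ⟨S', hmem S' hS'1 hS'card ?_ ?_, hS'sep⟩
      · intro h; exact hdisj (a i1) (h ▸ ha1S') (hSeq ▸ ha1S)
      · intro h; exact hdisj (b i0) (hTeq ▸ hb0T) (h ▸ hb0S')
  · intro h
    obtain ⟨A, hAF, hcase⟩ := h B B' hB.le hB'.le (Finset.disjoint_iff_inter_eq_empty.mp hd)
    rw [mem_sdiff, mem_filter] at hAF
    obtain ⟨⟨-, -, hAn⟩, hAnot⟩ := hAF
    simp only [mem_insert, mem_singleton, not_or] at hAnot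
    rcases hcase with ⟨hsub, -⟩ | ⟨hsub, -⟩
    · exact hAnot.1 (Finset.eq_of_subset_of_card_le hsub (le_of_le_of_eq hAn hB.symm)).symm
    · exact hAnot.2 (Finset.eq_of_subset_of_card_le hsub (le_of_le_of_eq hAn hB'.symm)).symm
end

section
/- For every k ≥ 1, the family F = {Aᵢ : 1 ≤ i ≤ ⌈k/2⌉}, where Aᵢ = {i, i+1, …, i + ⌈k/2⌉ − 1} ⊆ [k], is a splitting family on [k]. In particular, the minimum size of a splitting family of subsets of [k] is at most ⌈k/2⌉. -/
open Finset

/-- `A` splits `B` if `|A ∩ B|` equals `⌊|B|/2⌋` or `⌈|B|/2⌉`. -/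
def Splits {X : Type*} [DecidableEq X] (A B : Finset X) : Prop :=
  (A ∩ B).card = B.card / 2 ∨ (A ∩ B).card = (B.card + 1) / 2

lemma ivt_up (f : ℕ → ℕ) (h : ∀ i, f (i + 1) ≤ f i + 1)
    (a b c : ℕ) (hab : a ≤ b) (h1 : f a ≤ c) (h2 : c ≤ f b) :
    ∃ i, a ≤ i ∧ i ≤ b ∧ f i = c := by
  induction b, hab using Nat.le_induction with
  | base => exact ⟨a, le_rfl, le_rfl, by omega⟩
  | succ b hb ih =>
    by_cases hc : c ≤ f b
    · obtain ⟨i, hi1, hi2, hi3⟩ := ih hc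
      exact ⟨i, hi1, by omega, hi3⟩
    · exact ⟨b + 1, by omega, le_rfl, by have := h b; omega⟩

lemma ivt_down (f : ℕ → ℕ) (h : ∀ i, f i ≤ f (i + 1) + 1)
    (a b c : ℕ) (hab : a ≤ b) (h1 : c ≤ f a) (h2 : f b ≤ c) :
    ∃ i, a ≤ i ∧ i ≤ b ∧ f i = c := by
  induction b, hab using Nat.le_induction with
  | base => exact ⟨a, le_rfl, le_rfl, by omega⟩
  | succ b hb ih =>
    by_cases hc : f b ≤ c
    · obtain ⟨i, hi1, hi2, hi3⟩ := ih hc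
      exact ⟨i, hi1, by omega, hi3⟩
    · exact ⟨b + 1, by omega, le_rfl, by have := h b; omega⟩

theorem stmt_13 (k : ℕ) (hk : 1 ≤ k) :
    (∀ B ⊆ Finset.Icc 1 k,
      ∃ A ∈ (Finset.Icc 1 ((k + 1) / 2)).image
          (fun i => Finset.Icc i (i + (k + 1) / 2 - 1)), Splits A B) ∧
    ((Finset.Icc 1 ((k + 1) / 2)).image
        (fun i => Finset.Icc i (i + (k + 1) / 2 - 1))).card ≤ (k + 1) / 2 := by
  set m := (k + 1) / 2 with hmdef
  have hm : 1 ≤ m := by omega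
  have hk2 : k ≤ 2 * m := by omega
  constructor
  · intro B hB
    set f : ℕ → ℕ := fun i => ((Icc i (i + m - 1)) ∩ B).card with hf
    have hstep_up : ∀ i, f (i + 1) ≤ f i + 1 := by
      intro i
      have hsub : Icc (i + 1) (i + 1 + m - 1) ∩ B ⊆ (Icc i (i + m - 1) ∩ B) ∪ {i + m} := by
        intro x hx
        simp only [mem_inter, mem_Icc] at hx
        simp only [mem_union, mem_inter, mem_Icc, mem_singleton]
        rcases eq_or_ne x (i + m) with h | h
        · exact Or.inr h
        · exact Or.inl ⟨⟨by omega, by omega⟩, hx.2⟩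
      calc f (i + 1) ≤ ((Icc i (i + m - 1) ∩ B) ∪ {i + m}).card := card_le_card hsub
        _ ≤ f i + 1 := le_trans (card_union_le _ _) (by simp [hf])
    have hstep_down : ∀ i, f i ≤ f (i + 1) + 1 := by
      intro i
      have hsub : Icc i (i + m - 1) ∩ B ⊆ (Icc (i + 1) (i + 1 + m - 1) ∩ B) ∪ {i} := by
        intro x hx
        simp only [mem_inter, mem_Icc] at hx
        simp only [mem_union, mem_inter, mem_Icc, mem_singleton]
        rcases eq_or_ne x i with h | h
        · exact Or.inr h
        · exact Or.inl ⟨⟨by omega, by omega⟩, hx.2⟩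
      calc f i ≤ ((Icc (i + 1) (i + 1 + m - 1) ∩ B) ∪ {i}).card := card_le_card hsub
        _ ≤ f (i + 1) + 1 := le_trans (card_union_le _ _) (by simp [hf])
    set b := B.card with hbdef
    -- upper bound on f 1 + f m
    have hupper : f 1 + f m ≤ b + 1 := by
      have := card_union_add_card_inter (Icc 1 (1 + m - 1) ∩ B) (Icc m (m + m - 1) ∩ B)
      have hu : (Icc 1 (1 + m - 1) ∩ B) ∪ (Icc m (m + m - 1) ∩ B) ⊆ B := by
        intro x hx
        simp only [mem_union, mem_inter] at hx
        tauto
      have hi : (Icc 1 (1 + m - 1) ∩ B) ∩ (Icc m (m + m - 1) ∩ B) ⊆ {m} := by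
        intro x hx
        simp only [mem_inter, mem_Icc, mem_singleton] at *
        omega
      have h1 := card_le_card hu
      have h2 := card_le_card hi
      simp only [card_singleton] at h2
      show ((Icc 1 (1 + m - 1)) ∩ B).card + ((Icc m (m + m - 1)) ∩ B).card ≤ b + 1
      omega
    -- lower bound on f 1 + f m
    have hlower : b ≤ f 1 + f m + 1 := by
      have hsub : B.erase k ⊆ (Icc 1 (1 + m - 1) ∩ B) ∪ (Icc m (m + m - 1) ∩ B) := by
        intro x hx
        have hx' := hx
        rw [mem_erase] at hx'
        have hxk := hB hx'.2
        simp only [mem_Icc] at hxk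
        simp only [mem_union, mem_inter, mem_Icc]
        have : x ≠ k := hx'.1
        rcases le_or_gt x m with h | h
        · exact Or.inl ⟨⟨hxk.1, by omega⟩, hx'.2⟩
        · exact Or.inr ⟨⟨by omega, by omega⟩, hx'.2⟩
      have h1 := card_le_card hsub
      have h2 := card_union_le (Icc 1 (1 + m - 1) ∩ B) (Icc m (m + m - 1) ∩ B)
      have h3 : b ≤ (B.erase k).card + 1 := by
        have : B ⊆ insert k (B.erase k) := by
          intro x hx
          simp only [mem_insert, mem_erase]
          by_cases hx' : x = k <;> tauto
        have := card_le_card this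
        have := card_insert_le k (B.erase k)
        omega
      show b ≤ ((Icc 1 (1 + m - 1)) ∩ B).card + ((Icc m (m + m - 1)) ∩ B).card + 1
      omega
    have hwit : ∀ i, 1 ≤ i → i ≤ m → (f i = b / 2 ∨ f i = (b + 1) / 2) →
        ∃ A ∈ (Finset.Icc 1 m).image (fun i => Finset.Icc i (i + m - 1)), Splits A B := by
      intro i hi1 hi2 hfi
      refine ⟨Icc i (i + m - 1), mem_image_of_mem _ (by simp only [mem_Icc]; omega), ?_⟩
      exact hfi
    rcases le_or_gt (f 1) (f m) with hcmp | hcmp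
    · by_cases hA : b / 2 ≤ f 1
      · exact hwit 1 le_rfl hm (by omega)
      · by_cases hBc : f m ≤ (b + 1) / 2
        · exact hwit m hm le_rfl (by omega)
        · obtain ⟨i, hi1, hi2, hi3⟩ := ivt_up f hstep_up 1 m (b / 2) hm (by omega) (by omega)
          exact hwit i hi1 hi2 (Or.inl hi3)
    · by_cases hA : b / 2 ≤ f m
      · exact hwit m hm le_rfl (by omega)
      · by_cases hBc : f 1 ≤ (b + 1) / 2
        · exact hwit 1 le_rfl hm (by omega)
        · obtain ⟨i, hi1, hi2, hi3⟩ := ivt_down f hstep_down 1 m (b / 2) hm (by omega) (by omega)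
          exact hwit i hi1 hi2 (Or.inl hi3)
  · calc ((Finset.Icc 1 m).image (fun i => Finset.Icc i (i + m - 1))).card
        ≤ (Finset.Icc 1 m).card := card_image_le
      _ ≤ m := by rw [Nat.card_Icc]; omega
end

section
/- Let k ≥ 2 be even and let F be a splitting family of subsets of [k]. Then |F| ≥ 2^k / (3·C(k, k/2)), where C(k, k/2) is the central binomial coefficient. -/
open Finset

/-- `F` is a splitting family if every subset is split by some member of `F`. -/
def SplittingFamily {X : Type*} [DecidableEq X] (F : Finset (Finset X)) : Prop :=
  ∀ B : Finset X, ∃ A ∈ F, Splits A B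

instance inst_s14 {X : Type*} [DecidableEq X] (A B : Finset X) : Decidable (Splits A B) := by
  unfold Splits; infer_instance

lemma splits_symmDiff_card {X : Type*} [DecidableEq X] {A B : Finset X} (h : Splits A B) :
    (symmDiff A B).card = A.card - 1 ∨ (symmDiff A B).card = A.card ∨
      (symmDiff A B).card = A.card + 1 := by
  have hd : symmDiff A B = (A \ B) ∪ (B \ A) := by
    rw [symmDiff, sup_eq_union]
  have hcard : (symmDiff A B).card = (A \ B).card + (B \ A).card := by
    rw [hd, card_union_of_disjoint (disjoint_sdiff_sdiff)]
  have h1 : (A ∩ B).card + (A \ B).card = A.card := card_inter_add_card_sdiff A B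
  have h3 : (B ∩ A).card + (B \ A).card = B.card := card_inter_add_card_sdiff B A
  rw [inter_comm] at h3
  unfold Splits at h
  omega

lemma splits_count_le {k : ℕ} (A : Finset (Fin k)) :
    (univ.filter (fun B => Splits A B)).card ≤ 3 * k.choose (k / 2) := by
  set a := A.card with ha
  have hinj : Set.InjOn (fun B => symmDiff A B)
      ↑(univ.filter (fun B => Splits A B)) := by
    intro B hB C hC hBC
    have := congrArg (symmDiff A) hBC
    simpa [symmDiff_symmDiff_cancel_left] using this
  have hmap : ∀ B ∈ univ.filter (fun B => Splits A B),
      symmDiff A B ∈ (powersetCard (a - 1) (univ : Finset (Fin k))) ∪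
        (powersetCard a univ) ∪ (powersetCard (a + 1) univ) := by
    intro B hB
    simp only [mem_filter, mem_univ, true_and] at hB
    have := splits_symmDiff_card hB
    simp only [mem_union, mem_powersetCard_univ]
    tauto
  have hcard := Finset.card_le_card_of_injOn _ hmap hinj
  have hle : ((powersetCard (a - 1) (univ : Finset (Fin k))) ∪
      (powersetCard a univ) ∪ (powersetCard (a + 1) univ)).card ≤
      k.choose (a - 1) + k.choose a + k.choose (a + 1) := by
    calc _ ≤ ((powersetCard (a - 1) (univ : Finset (Fin k))) ∪
          (powersetCard a univ)).card + (powersetCard (a + 1) (univ : Finset (Fin k))).card :=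
        card_union_le _ _
      _ ≤ (powersetCard (a - 1) (univ : Finset (Fin k))).card +
          (powersetCard a (univ : Finset (Fin k))).card +
          (powersetCard (a + 1) (univ : Finset (Fin k))).card := by
        gcongr; exact card_union_le _ _
      _ = k.choose (a - 1) + k.choose a + k.choose (a + 1) := by
        simp [card_powersetCard, card_univ]
  have hmid : ∀ m, k.choose m ≤ k.choose (k / 2) := fun m => Nat.choose_le_middle m k
  calc (univ.filter (fun B => Splits A B)).card ≤ _ := hcard
    _ ≤ k.choose (a - 1) + k.choose a + k.choose (a + 1) := hle
    _ ≤ 3 * k.choose (k / 2) := by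
        have := hmid (a - 1); have := hmid a; have := hmid (a + 1); omega

theorem stmt_14 (k : ℕ) (hk : 2 ≤ k) (hke : Even k) (F : Finset (Finset (Fin k)))
    (hF : SplittingFamily F) :
    (2 : ℝ) ^ k / (3 * (k.choose (k / 2))) ≤ F.card := by
  have hsub : (univ : Finset (Finset (Fin k))) ⊆
      F.biUnion (fun A => univ.filter (fun B => Splits A B)) := by
    intro B _
    obtain ⟨A, hA, hAB⟩ := hF B
    exact mem_biUnion.2 ⟨A, hA, by simp [hAB]⟩
  have hnat : 2 ^ k ≤ F.card * (3 * k.choose (k / 2)) := by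
    calc 2 ^ k = (univ : Finset (Finset (Fin k))).card := by
          simp [card_univ]
      _ ≤ (F.biUnion (fun A => univ.filter (fun B => Splits A B))).card :=
          card_le_card hsub
      _ ≤ ∑ A ∈ F, (univ.filter (fun B => Splits A B)).card := card_biUnion_le
      _ ≤ ∑ A ∈ F, 3 * k.choose (k / 2) := by
          exact Finset.sum_le_sum fun A _ => splits_count_le A
      _ = F.card * (3 * k.choose (k / 2)) := by rw [Finset.sum_const, smul_eq_mul]
  have hpos : (0 : ℝ) < 3 * (k.choose (k / 2)) := by
    have : 0 < k.choose (k / 2) := Nat.choose_pos (Nat.div_le_self k 2)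
    positivity
  rw [div_le_iff₀ hpos]
  calc (2 : ℝ) ^ k = ((2 ^ k : ℕ) : ℝ) := by push_cast; ring
    _ ≤ ((F.card * (3 * k.choose (k / 2)) : ℕ) : ℝ) := Nat.cast_le.2 hnat
    _ = F.card * (3 * (k.choose (k / 2))) := by push_cast; ring
end

section
/- Let A, B, C be subsets of [k]. The collection A, B, C is not splittable if and only if the three cardinalities |A ∩ B ∩ Cᶜ|, |A ∩ Bᶜ ∩ C|, and |Aᶜ ∩ B ∩ C| are all odd and A ∪ B ∪ C = (A ∩ B ∩ Cᶜ) ∪ (A ∩ Bᶜ ∩ C) ∪ (Aᶜ ∩ B ∩ C) (equivalently, A ∩ B ∩ C = ∅ and each of A ∖ (B ∪ C), B ∖ (A ∪ C), C ∖ (A ∪ B) is empty). -/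
open Finset

lemma card_union4 {X : Type*} [DecidableEq X] {P Q R T : Finset X}
    (d1 : Disjoint P Q) (d2 : Disjoint P R) (d3 : Disjoint Q R)
    (d4 : Disjoint P T) (d5 : Disjoint Q T) (d6 : Disjoint R T) :
    (P ∪ Q ∪ R ∪ T).card = P.card + Q.card + R.card + T.card := by
  rw [Finset.card_union_of_disjoint
      (Finset.disjoint_union_left.mpr ⟨Finset.disjoint_union_left.mpr ⟨d4, d5⟩, d6⟩),
    Finset.card_union_of_disjoint (Finset.disjoint_union_left.mpr ⟨d2, d3⟩),
    Finset.card_union_of_disjoint d1]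

lemma cardA (k : ℕ) (A B C : Finset (Fin k)) :
    A.card = (A ∩ Bᶜ ∩ Cᶜ).card + (A ∩ B ∩ Cᶜ).card + (A ∩ Bᶜ ∩ C).card
      + (A ∩ B ∩ C).card := by
  rw [← card_union4]
  · congr 1
    ext x
    simp only [Finset.mem_inter, Finset.mem_compl, Finset.mem_union]
    tauto
  all_goals simp only [Finset.disjoint_left, Finset.mem_inter, Finset.mem_compl]; tauto

lemma cardB (k : ℕ) (A B C : Finset (Fin k)) :
    B.card = (Aᶜ ∩ B ∩ Cᶜ).card + (A ∩ B ∩ Cᶜ).card + (Aᶜ ∩ B ∩ C).card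
      + (A ∩ B ∩ C).card := by
  rw [← card_union4]
  · congr 1
    ext x
    simp only [Finset.mem_inter, Finset.mem_compl, Finset.mem_union]
    tauto
  all_goals simp only [Finset.disjoint_left, Finset.mem_inter, Finset.mem_compl]; tauto

lemma cardC (k : ℕ) (A B C : Finset (Fin k)) :
    C.card = (Aᶜ ∩ Bᶜ ∩ C).card + (A ∩ Bᶜ ∩ C).card + (Aᶜ ∩ B ∩ C).card
      + (A ∩ B ∩ C).card := by
  rw [← card_union4]
  · congr 1
    ext x
    simp only [Finset.mem_inter, Finset.mem_compl, Finset.mem_union]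
    tauto
  all_goals simp only [Finset.disjoint_left, Finset.mem_inter, Finset.mem_compl]; tauto

lemma key (nα nβ nγ na nb nc nt : ℕ)
    (h : ¬(na % 2 = 1 ∧ nb % 2 = 1 ∧ nc % 2 = 1 ∧ nt = 0 ∧ nα = 0 ∧ nβ = 0 ∧ nγ = 0)) :
    ∃ xα xβ xγ xa xb xc xt : ℕ,
      xα ≤ nα ∧ xβ ≤ nβ ∧ xγ ≤ nγ ∧ xa ≤ na ∧ xb ≤ nb ∧ xc ≤ nc ∧ xt ≤ nt ∧
      (xα + xa + xb + xt = (nα + na + nb + nt) / 2 ∨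
        xα + xa + xb + xt = (nα + na + nb + nt + 1) / 2) ∧
      (xβ + xa + xc + xt = (nβ + na + nc + nt) / 2 ∨
        xβ + xa + xc + xt = (nβ + na + nc + nt + 1) / 2) ∧
      (xγ + xb + xc + xt = (nγ + nb + nc + nt) / 2 ∨
        xγ + xb + xc + xt = (nγ + nb + nc + nt + 1) / 2) := by
  rcases Nat.mod_two_eq_zero_or_one nt with ht | ht
  · rcases Nat.mod_two_eq_zero_or_one na with ha | ha
    <;> rcases Nat.mod_two_eq_zero_or_one nb with hb | hb
    <;> rcases Nat.mod_two_eq_zero_or_one nc with hc | hc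
    -- (0,0,0),(0,0,1),(0,1,0): all floors
    · exact ⟨(nα+na+nb+nt)/2 - (na/2+nb/2+nt/2), (nβ+na+nc+nt)/2 - (na/2+nc/2+nt/2),
        (nγ+nb+nc+nt)/2 - (nb/2+nc/2+nt/2), na/2, nb/2, nc/2, nt/2, by omega⟩
    · exact ⟨(nα+na+nb+nt)/2 - (na/2+nb/2+nt/2), (nβ+na+nc+nt)/2 - (na/2+nc/2+nt/2),
        (nγ+nb+nc+nt)/2 - (nb/2+nc/2+nt/2), na/2, nb/2, nc/2, nt/2, by omega⟩
    · exact ⟨(nα+na+nb+nt)/2 - (na/2+nb/2+nt/2), (nβ+na+nc+nt)/2 - (na/2+nc/2+nt/2),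
        (nγ+nb+nc+nt)/2 - (nb/2+nc/2+nt/2), na/2, nb/2, nc/2, nt/2, by omega⟩
    -- (0,1,1): db = 1
    · exact ⟨(nα+na+nb+nt)/2 - (na/2+nb/2+1+nt/2), (nβ+na+nc+nt)/2 - (na/2+nc/2+nt/2),
        (nγ+nb+nc+nt)/2 - (nb/2+1+nc/2+nt/2), na/2, nb/2+1, nc/2, nt/2, by omega⟩
    -- (1,0,0): all floors
    · exact ⟨(nα+na+nb+nt)/2 - (na/2+nb/2+nt/2), (nβ+na+nc+nt)/2 - (na/2+nc/2+nt/2),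
        (nγ+nb+nc+nt)/2 - (nb/2+nc/2+nt/2), na/2, nb/2, nc/2, nt/2, by omega⟩
    -- (1,0,1): da = 1
    · exact ⟨(nα+na+nb+nt)/2 - (na/2+1+nb/2+nt/2), (nβ+na+nc+nt)/2 - (na/2+1+nc/2+nt/2),
        (nγ+nb+nc+nt)/2 - (nb/2+nc/2+nt/2), na/2+1, nb/2, nc/2, nt/2, by omega⟩
    -- (1,1,0): da = 1
    · exact ⟨(nα+na+nb+nt)/2 - (na/2+1+nb/2+nt/2), (nβ+na+nc+nt)/2 - (na/2+1+nc/2+nt/2),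
        (nγ+nb+nc+nt)/2 - (nb/2+nc/2+nt/2), na/2+1, nb/2, nc/2, nt/2, by omega⟩
    -- (1,1,1), nt even
    · rcases Nat.eq_zero_or_pos nt with ht0 | ht0
      · rcases Nat.eq_zero_or_pos nα with hα0 | hα0
        · rcases Nat.eq_zero_or_pos nβ with hβ0 | hβ0
          · rcases Nat.eq_zero_or_pos nγ with hγ0 | hγ0
            · exact absurd ⟨ha, hb, hc, ht0, hα0, hβ0, hγ0⟩ h
            -- nγ ≥ 1: da = 1
            · exact ⟨(nα+na+nb+nt)/2 - (na/2+1+nb/2+nt/2), (nβ+na+nc+nt)/2 - (na/2+1+nc/2+nt/2),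
                (nγ+nb+nc+nt)/2 - (nb/2+nc/2+nt/2), na/2+1, nb/2, nc/2, nt/2, by omega⟩
          -- nβ ≥ 1: db = 1
          · exact ⟨(nα+na+nb+nt)/2 - (na/2+nb/2+1+nt/2), (nβ+na+nc+nt)/2 - (na/2+nc/2+nt/2),
              (nγ+nb+nc+nt)/2 - (nb/2+1+nc/2+nt/2), na/2, nb/2+1, nc/2, nt/2, by omega⟩
        -- nα ≥ 1: dc = 1
        · exact ⟨(nα+na+nb+nt)/2 - (na/2+nb/2+nt/2), (nβ+na+nc+nt)/2 - (na/2+nc/2+1+nt/2),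
            (nγ+nb+nc+nt)/2 - (nb/2+nc/2+1+nt/2), na/2, nb/2, nc/2+1, nt/2, by omega⟩
      -- nt ≥ 2: dt = 1
      · exact ⟨(nα+na+nb+nt)/2 - (na/2+nb/2+nt/2+1), (nβ+na+nc+nt)/2 - (na/2+nc/2+nt/2+1),
          (nγ+nb+nc+nt)/2 - (nb/2+nc/2+nt/2+1), na/2, nb/2, nc/2, nt/2+1, by omega⟩
  -- nt odd: da=ra, db=rb, dc=rc
  · exact ⟨(nα+na+nb+nt)/2 - (na/2+na%2+nb/2+nb%2+nt/2),
      (nβ+na+nc+nt)/2 - (na/2+na%2+nc/2+nc%2+nt/2),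
      (nγ+nb+nc+nt)/2 - (nb/2+nb%2+nc/2+nc%2+nt/2),
      na/2+na%2, nb/2+nb%2, nc/2+nc%2, nt/2, by omega⟩

lemma construct (k : ℕ) (A B C : Finset (Fin k))
    (h : ¬((A ∩ B ∩ Cᶜ).card % 2 = 1 ∧ (A ∩ Bᶜ ∩ C).card % 2 = 1 ∧ (Aᶜ ∩ B ∩ C).card % 2 = 1 ∧
      (A ∩ B ∩ C).card = 0 ∧ (A ∩ Bᶜ ∩ Cᶜ).card = 0 ∧ (Aᶜ ∩ B ∩ Cᶜ).card = 0 ∧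
      (Aᶜ ∩ Bᶜ ∩ C).card = 0)) :
    ∃ S : Finset (Fin k), Splits S A ∧ Splits S B ∧ Splits S C := by
  obtain ⟨xα, xβ, xγ, xa, xb, xc, xt, bα, bβ, bγ, ba, bb, bc, bt, e1, e2, e3⟩ :=
    key (A ∩ Bᶜ ∩ Cᶜ).card (Aᶜ ∩ B ∩ Cᶜ).card (Aᶜ ∩ Bᶜ ∩ C).card
      (A ∩ B ∩ Cᶜ).card (A ∩ Bᶜ ∩ C).card (Aᶜ ∩ B ∩ C).card (A ∩ B ∩ C).card h
  obtain ⟨Sα, hsα, cα⟩ := Finset.exists_subset_card_eq bα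
  obtain ⟨Sβ, hsβ, cβ⟩ := Finset.exists_subset_card_eq bβ
  obtain ⟨Sγ, hsγ, cγ⟩ := Finset.exists_subset_card_eq bγ
  obtain ⟨Sa, hsa, ca⟩ := Finset.exists_subset_card_eq ba
  obtain ⟨Sb, hsb, cb⟩ := Finset.exists_subset_card_eq bb
  obtain ⟨Sc, hsc, cc⟩ := Finset.exists_subset_card_eq bc
  obtain ⟨St, hst, ct⟩ := Finset.exists_subset_card_eq bt
  have pα : ∀ x ∈ Sα, x ∈ A ∧ x ∉ B ∧ x ∉ C := fun x hx => by
    have h' := hsα hx; simp only [Finset.mem_inter, Finset.mem_compl] at h'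
    exact ⟨h'.1.1, h'.1.2, h'.2⟩
  have pβ : ∀ x ∈ Sβ, x ∉ A ∧ x ∈ B ∧ x ∉ C := fun x hx => by
    have h' := hsβ hx; simp only [Finset.mem_inter, Finset.mem_compl] at h'
    exact ⟨h'.1.1, h'.1.2, h'.2⟩
  have pγ : ∀ x ∈ Sγ, x ∉ A ∧ x ∉ B ∧ x ∈ C := fun x hx => by
    have h' := hsγ hx; simp only [Finset.mem_inter, Finset.mem_compl] at h'
    exact ⟨h'.1.1, h'.1.2, h'.2⟩
  have pa : ∀ x ∈ Sa, x ∈ A ∧ x ∈ B ∧ x ∉ C := fun x hx => by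
    have h' := hsa hx; simp only [Finset.mem_inter, Finset.mem_compl] at h'
    exact ⟨h'.1.1, h'.1.2, h'.2⟩
  have pb : ∀ x ∈ Sb, x ∈ A ∧ x ∉ B ∧ x ∈ C := fun x hx => by
    have h' := hsb hx; simp only [Finset.mem_inter, Finset.mem_compl] at h'
    exact ⟨h'.1.1, h'.1.2, h'.2⟩
  have pc : ∀ x ∈ Sc, x ∉ A ∧ x ∈ B ∧ x ∈ C := fun x hx => by
    have h' := hsc hx; simp only [Finset.mem_inter, Finset.mem_compl] at h'
    exact ⟨h'.1.1, h'.1.2, h'.2⟩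
  have pt : ∀ x ∈ St, x ∈ A ∧ x ∈ B ∧ x ∈ C := fun x hx => by
    have h' := hst hx; simp only [Finset.mem_inter, Finset.mem_compl] at h'
    exact ⟨h'.1.1, h'.1.2, h'.2⟩
  refine ⟨Sα ∪ Sβ ∪ Sγ ∪ Sa ∪ Sb ∪ Sc ∪ St, ?_, ?_, ?_⟩
  · -- Splits S A
    have hSA : (Sα ∪ Sβ ∪ Sγ ∪ Sa ∪ Sb ∪ Sc ∪ St) ∩ A = Sα ∪ Sa ∪ Sb ∪ St := by
      ext x
      simp only [Finset.mem_inter, Finset.mem_union]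
      constructor
      · rintro ⟨((((((h|h)|h)|h)|h)|h)|h), hA⟩
        · exact Or.inl (Or.inl (Or.inl h))
        · exact absurd hA (pβ x h).1
        · exact absurd hA (pγ x h).1
        · exact Or.inl (Or.inl (Or.inr h))
        · exact Or.inl (Or.inr h)
        · exact absurd hA (pc x h).1
        · exact Or.inr h
      · rintro (((h|h)|h)|h)
        · exact ⟨Or.inl (Or.inl (Or.inl (Or.inl (Or.inl (Or.inl h))))), (pα x h).1⟩
        · exact ⟨Or.inl (Or.inl (Or.inl (Or.inr h))), (pa x h).1⟩
        · exact ⟨Or.inl (Or.inl (Or.inr h)), (pb x h).1⟩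
        · exact ⟨Or.inr h, (pt x h).1⟩
    have cSA : ((Sα ∪ Sβ ∪ Sγ ∪ Sa ∪ Sb ∪ Sc ∪ St) ∩ A).card = xα + xa + xb + xt := by
      rw [hSA, card_union4, cα, ca, cb, ct]
      all_goals rw [Finset.disjoint_left]
      · intro x h1 h2; exact (pα x h1).2.1 (pa x h2).2.1
      · intro x h1 h2; exact (pα x h1).2.2 (pb x h2).2.2
      · intro x h1 h2; exact (pb x h2).2.1 (pa x h1).2.1
      · intro x h1 h2; exact (pα x h1).2.1 (pt x h2).2.1
      · intro x h1 h2; exact (pa x h1).2.2 (pt x h2).2.2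
      · intro x h1 h2; exact (pb x h1).2.1 (pt x h2).2.1
    rw [Splits, cSA, cardA k A B C]
    exact e1
  · -- Splits S B
    have hSB : (Sα ∪ Sβ ∪ Sγ ∪ Sa ∪ Sb ∪ Sc ∪ St) ∩ B = Sβ ∪ Sa ∪ Sc ∪ St := by
      ext x
      simp only [Finset.mem_inter, Finset.mem_union]
      constructor
      · rintro ⟨((((((h|h)|h)|h)|h)|h)|h), hB⟩
        · exact absurd hB (pα x h).2.1
        · exact Or.inl (Or.inl (Or.inl h))
        · exact absurd hB (pγ x h).2.1
        · exact Or.inl (Or.inl (Or.inr h))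
        · exact absurd hB (pb x h).2.1
        · exact Or.inl (Or.inr h)
        · exact Or.inr h
      · rintro (((h|h)|h)|h)
        · exact ⟨Or.inl (Or.inl (Or.inl (Or.inl (Or.inl (Or.inr h))))), (pβ x h).2.1⟩
        · exact ⟨Or.inl (Or.inl (Or.inl (Or.inr h))), (pa x h).2.1⟩
        · exact ⟨Or.inl (Or.inr h), (pc x h).2.1⟩
        · exact ⟨Or.inr h, (pt x h).2.1⟩
    have cSB : ((Sα ∪ Sβ ∪ Sγ ∪ Sa ∪ Sb ∪ Sc ∪ St) ∩ B).card = xβ + xa + xc + xt := by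
      rw [hSB, card_union4, cβ, ca, cc, ct]
      all_goals rw [Finset.disjoint_left]
      · intro x h1 h2; exact (pβ x h1).1 (pa x h2).1
      · intro x h1 h2; exact (pβ x h1).2.2 (pc x h2).2.2
      · intro x h1 h2; exact (pc x h2).1 (pa x h1).1
      · intro x h1 h2; exact (pβ x h1).1 (pt x h2).1
      · intro x h1 h2; exact (pa x h1).2.2 (pt x h2).2.2
      · intro x h1 h2; exact (pc x h1).1 (pt x h2).1
    rw [Splits, cSB, cardB k A B C]
    exact e2
  · -- Splits S C
    have hSC : (Sα ∪ Sβ ∪ Sγ ∪ Sa ∪ Sb ∪ Sc ∪ St) ∩ C = Sγ ∪ Sb ∪ Sc ∪ St := by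
      ext x
      simp only [Finset.mem_inter, Finset.mem_union]
      constructor
      · rintro ⟨((((((h|h)|h)|h)|h)|h)|h), hC⟩
        · exact absurd hC (pα x h).2.2
        · exact absurd hC (pβ x h).2.2
        · exact Or.inl (Or.inl (Or.inl h))
        · exact absurd hC (pa x h).2.2
        · exact Or.inl (Or.inl (Or.inr h))
        · exact Or.inl (Or.inr h)
        · exact Or.inr h
      · rintro (((h|h)|h)|h)
        · exact ⟨Or.inl (Or.inl (Or.inl (Or.inl (Or.inr h)))), (pγ x h).2.2⟩
        · exact ⟨Or.inl (Or.inl (Or.inr h)), (pb x h).2.2⟩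
        · exact ⟨Or.inl (Or.inr h), (pc x h).2.2⟩
        · exact ⟨Or.inr h, (pt x h).2.2⟩
    have cSC : ((Sα ∪ Sβ ∪ Sγ ∪ Sa ∪ Sb ∪ Sc ∪ St) ∩ C).card = xγ + xb + xc + xt := by
      rw [hSC, card_union4, cγ, cb, cc, ct]
      all_goals rw [Finset.disjoint_left]
      · intro x h1 h2; exact (pγ x h1).1 (pb x h2).1
      · intro x h1 h2; exact (pγ x h1).2.1 (pc x h2).2.1
      · intro x h1 h2; exact (pc x h2).1 (pb x h1).1
      · intro x h1 h2; exact (pγ x h1).1 (pt x h2).1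
      · intro x h1 h2; exact (pb x h1).2.1 (pt x h2).2.1
      · intro x h1 h2; exact (pc x h1).1 (pt x h2).1
    rw [Splits, cSC, cardC k A B C]
    exact e3

theorem stmt_17 (k : ℕ) (A B C : Finset (Fin k)) :
    ¬ (∃ S : Finset (Fin k), Splits S A ∧ Splits S B ∧ Splits S C) ↔
      (Odd (A ∩ B ∩ Cᶜ).card ∧ Odd (A ∩ Bᶜ ∩ C).card ∧ Odd (Aᶜ ∩ B ∩ C).card ∧
        A ∪ B ∪ C = (A ∩ B ∩ Cᶜ) ∪ (A ∩ Bᶜ ∩ C) ∪ (Aᶜ ∩ B ∩ C)) := by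
  constructor
  · intro hn
    by_contra hR
    refine hn (construct k A B C ?_)
    rintro ⟨o1, o2, o3, z1, z2, z3, z4⟩
    refine hR ⟨Nat.odd_iff.mpr o1, Nat.odd_iff.mpr o2, Nat.odd_iff.mpr o3, ?_⟩
    rw [Finset.card_eq_zero] at z1 z2 z3 z4
    ext x
    have h1 := Finset.eq_empty_iff_forall_notMem.mp z1 x
    have h2 := Finset.eq_empty_iff_forall_notMem.mp z2 x
    have h3 := Finset.eq_empty_iff_forall_notMem.mp z3 x
    have h4 := Finset.eq_empty_iff_forall_notMem.mp z4 x
    simp only [Finset.mem_inter, Finset.mem_compl] at h1 h2 h3 h4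
    simp only [Finset.mem_union, Finset.mem_inter, Finset.mem_compl]
    clear hn hR z1 z2 z3 z4 o1 o2 o3
    tauto
  · rintro ⟨h1, h2, h3, hU⟩
    rintro ⟨S, sA, sB, sC⟩
    have hx := Finset.ext_iff.mp hU
    simp only [Finset.mem_union, Finset.mem_inter, Finset.mem_compl] at hx
    have hA : A = (A ∩ B ∩ Cᶜ) ∪ (A ∩ Bᶜ ∩ C) := by
      ext x
      simp only [Finset.mem_union, Finset.mem_inter, Finset.mem_compl]
      have := hx x
      clear hx h1 h2 h3 hU sA sB sC
      tauto
    have hB : B = (A ∩ B ∩ Cᶜ) ∪ (Aᶜ ∩ B ∩ C) := by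
      ext x
      simp only [Finset.mem_union, Finset.mem_inter, Finset.mem_compl]
      have := hx x
      clear hx h1 h2 h3 hU sA sB sC
      tauto
    have hC : C = (A ∩ Bᶜ ∩ C) ∪ (Aᶜ ∩ B ∩ C) := by
      ext x
      simp only [Finset.mem_union, Finset.mem_inter, Finset.mem_compl]
      have := hx x
      clear hx h1 h2 h3 hU sA sB sC
      tauto
    have dab : Disjoint (A ∩ B ∩ Cᶜ) (A ∩ Bᶜ ∩ C) := by
      simp only [Finset.disjoint_left, Finset.mem_inter, Finset.mem_compl]; tauto
    have dac : Disjoint (A ∩ B ∩ Cᶜ) (Aᶜ ∩ B ∩ C) := by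
      simp only [Finset.disjoint_left, Finset.mem_inter, Finset.mem_compl]; tauto
    have dbc : Disjoint (A ∩ Bᶜ ∩ C) (Aᶜ ∩ B ∩ C) := by
      simp only [Finset.disjoint_left, Finset.mem_inter, Finset.mem_compl]; tauto
    rw [Splits, hA, Finset.inter_union_distrib_left,
      Finset.card_union_of_disjoint (dab.mono Finset.inter_subset_right Finset.inter_subset_right),
      Finset.card_union_of_disjoint dab] at sA
    rw [Splits, hB, Finset.inter_union_distrib_left,
      Finset.card_union_of_disjoint (dac.mono Finset.inter_subset_right Finset.inter_subset_right),
      Finset.card_union_of_disjoint dac] at sB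
    rw [Splits, hC, Finset.inter_union_distrib_left,
      Finset.card_union_of_disjoint (dbc.mono Finset.inter_subset_right Finset.inter_subset_right),
      Finset.card_union_of_disjoint dbc] at sC
    rw [Nat.odd_iff] at h1 h2 h3
    omega
end

section
/- Let k ≥ 2 be even and let F be a 3-splitting family of subsets of [k]. Then |F| ≥ 2^{3k} / (54·C(k, k/2)³), where C(k, k/2) is the central binomial coefficient. -/
open Finset

open scoped symmDiff

/-- `F` is `n`-splitting if every splittable collection `B₁, …, Bₙ` is simultaneously
split by some member of `F`. -/
def NSplitting {X : Type*} [Fintype X] [DecidableEq X] (n : ℕ) (F : Finset (Finset X)) : Prop :=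
  ∀ B : Fin n → Finset X, (∃ A : Finset X, ∀ i, Splits A (B i)) →
    ∃ A ∈ F, ∀ i, Splits A (B i)

lemma splits_iff {X : Type*} [DecidableEq X] (A B : Finset X) :
    Splits A B ↔ (B.card ≤ 2*(A∩B).card + 1 ∧ 2*(A∩B).card ≤ B.card + 1) := by
  have : (A∩B).card ≤ B.card := card_le_card inter_subset_right
  unfold Splits; omega

set_option maxRecDepth 100000 in
lemma core : ∀ ε : Bool × Bool × Bool → Bool,
    (xor (ε (true,true,true)) (xor (ε (true,false,true)) (xor (ε (false,true,true)) (ε (false,false,true)))) = true) →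
    ∃ s : Bool × Bool × Bool → Bool,
      |∑ w : Bool × Bool × Bool, (if w.1 = true then (if ε w then (if s w then (1:ℤ) else -1) else 0) else 0)| ≤ 1 ∧
      |∑ w : Bool × Bool × Bool, (if w.2.1 = true then (if ε w then (if s w then (1:ℤ) else -1) else 0) else 0)| ≤ 1 ∧
      |∑ w : Bool × Bool × Bool, (if w.2.2 = true then (if ε w then (if s w then (1:ℤ) else -1) else 0) else 0)| ≤ 1 := by
  decide

lemma xor_of_odd_sum (a b c d : ℕ) (h : (a+b+c+d) % 2 = 1) :
    xor (decide (a%2=1)) (xor (decide (b%2=1)) (xor (decide (c%2=1)) (decide (d%2=1)))) = true := by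
  have ha := Nat.mod_two_eq_zero_or_one a
  have hb := Nat.mod_two_eq_zero_or_one b
  have hc := Nat.mod_two_eq_zero_or_one c
  have hd := Nat.mod_two_eq_zero_or_one d
  rcases ha with h1|h1 <;> rcases hb with h2|h2 <;> rcases hc with h3|h3 <;>
    rcases hd with h4|h4 <;> simp [h1,h2,h3,h4] <;> omega

lemma splittable_of_odd {X : Type*} [Fintype X] [DecidableEq X]
    (B₁ B₂ B₃ : Finset X) (h3 : Odd B₃.card) :
    ∃ A : Finset X, Splits A B₁ ∧ Splits A B₂ ∧ Splits A B₃ := by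
  classical
  set f : X → Bool × Bool × Bool :=
    fun x => (decide (x ∈ B₁), decide (x ∈ B₂), decide (x ∈ B₃)) with hf
  set m : Bool × Bool × Bool → ℕ := fun w => (univ.filter (fun x => f x = w)).card with hm
  set ε : Bool × Bool × Bool → Bool := fun w => decide (m w % 2 = 1) with hε
  -- fiberwise card of any of the B's
  have hBcard : ∀ (B : Finset X) (p : Bool × Bool × Bool → Bool),
      (∀ x, x ∈ B ↔ p (f x) = true) →
      B.card = ∑ w : Bool × Bool × Bool, (if p w = true then m w else 0) := by
    intro B p hp
    rw [card_eq_sum_card_fiberwise (f := f) (t := univ) (fun x _ => mem_univ _)]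
    refine sum_congr rfl fun w _ => ?_
    by_cases hw : p w = true
    · rw [if_pos hw, hm]
      congr 1
      ext x
      simp only [mem_filter, mem_univ, true_and, and_iff_right_iff_imp]
      intro hfx; rw [hp]; rw [hfx]; exact hw
    · rw [if_neg hw, card_eq_zero]
      ext x
      simp only [mem_filter, notMem_empty, iff_false, not_and]
      intro hxB hfx
      exact hw (hfx ▸ (hp x).1 hxB)
  have hB1 := hBcard B₁ (fun w => w.1) (fun x => by simp [hf])
  have hB2 := hBcard B₂ (fun w => w.2.1) (fun x => by simp [hf])
  have hB3 := hBcard B₃ (fun w => w.2.2) (fun x => by simp [hf])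
  beta_reduce at hB1 hB2 hB3
  -- parity condition for core
  have hpar : xor (ε (true,true,true)) (xor (ε (true,false,true))
      (xor (ε (false,true,true)) (ε (false,false,true)))) = true := by
    rw [hε]
    apply xor_of_odd_sum
    have hodd : B₃.card % 2 = 1 := Nat.odd_iff.1 h3
    rw [hB3] at hodd
    rw [Fintype.sum_prod_type] at hodd
    simp only [Fintype.sum_bool, Fintype.sum_prod_type] at hodd
    simp at hodd
    omega
  obtain ⟨s, hs1, hs2, hs3⟩ := core ε hpar
  -- choose subsets of fibers
  set c : Bool × Bool × Bool → ℕ := fun w => if s w then (m w + 1)/2 else m w / 2 with hc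
  have hchoice : ∀ w : Bool × Bool × Bool,
      ∃ T ⊆ univ.filter (fun x => f x = w), T.card = c w := by
    intro w
    have hub : c w ≤ m w := by
      simp only [hc]
      rcases Bool.eq_false_or_eq_true (s w) with h|h <;> simp [h] <;> omega
    exact exists_subset_card_eq hub
  choose S hS hScard using hchoice
  set A : Finset X := (univ : Finset (Bool × Bool × Bool)).biUnion S with hA
  have hmemA : ∀ x, x ∈ A ↔ x ∈ S (f x) := by
    intro x
    constructor
    · intro hx
      rcases mem_biUnion.1 hx with ⟨w, _, hw⟩
      have hfx : f x = w := by simpa using (mem_filter.1 (hS w hw)).2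
      rwa [hfx]
    · intro hx; exact mem_biUnion.2 ⟨f x, mem_univ _, hx⟩
  -- fiberwise card of A ∩ B
  have hAcard : ∀ (B : Finset X) (p : Bool × Bool × Bool → Bool),
      (∀ x, x ∈ B ↔ p (f x) = true) →
      (A ∩ B).card = ∑ w : Bool × Bool × Bool, (if p w = true then c w else 0) := by
    intro B p hp
    rw [card_eq_sum_card_fiberwise (f := f) (t := univ) (fun x _ => mem_univ _)]
    refine sum_congr rfl fun w _ => ?_
    have hkey : (A ∩ B).filter (fun x => f x = w) = if p w = true then S w else ∅ := by
      ext x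
      simp only [mem_filter, mem_inter]
      constructor
      · rintro ⟨⟨hxA, hxB⟩, hfx⟩
        have hpw : p w = true := hfx ▸ (hp x).1 hxB
        rw [if_pos hpw]
        rw [hmemA, hfx] at hxA; exact hxA
      · intro hx
        by_cases hpw : p w = true
        · rw [if_pos hpw] at hx
          have hfx : f x = w := by simpa using (mem_filter.1 (hS w hx)).2
          exact ⟨⟨(hmemA x).2 (hfx ▸ hx), (hp x).2 (hfx ▸ hpw)⟩, hfx⟩
        · rw [if_neg hpw] at hx; exact absurd hx (notMem_empty x)
    rw [hkey]
    split
    · exact hScard _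
    · exact card_empty
  have hA1 := hAcard B₁ (fun w => w.1) (fun x => by simp [hf])
  have hA2 := hAcard B₂ (fun w => w.2.1) (fun x => by simp [hf])
  have hA3 := hAcard B₃ (fun w => w.2.2) (fun x => by simp [hf])
  beta_reduce at hA1 hA2 hA3
  -- pointwise integer identity
  have hpt : ∀ w : Bool × Bool × Bool,
      (2 * (c w) : ℤ) - (m w) = (if ε w then (if s w then (1:ℤ) else -1) else 0) := by
    intro w
    rcases Nat.mod_two_eq_zero_or_one (m w) with h|h <;>
      rcases Bool.eq_false_or_eq_true (s w) with hsw|hsw <;>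
      simp only [hc, hε, h, hsw] <;> simp <;> omega
  have keygen : ∀ (p : Bool × Bool × Bool → Bool) (cA b : ℕ),
      cA = ∑ w : Bool × Bool × Bool, (if p w = true then c w else 0) →
      b = ∑ w : Bool × Bool × Bool, (if p w = true then m w else 0) →
      (2 * cA : ℤ) - b =
        ∑ w : Bool × Bool × Bool, (if p w = true then (if ε w then (if s w then (1:ℤ) else -1) else 0) else 0) := by
    intro p cA b hcA hb
    rw [hcA, hb]
    push_cast
    rw [Finset.mul_sum, ← Finset.sum_sub_distrib]
    refine sum_congr rfl fun w _ => ?_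
    have hw := hpt w
    by_cases h : p w = true <;> simp only [h, if_true, if_false, Bool.false_eq_true] <;> linarith
  refine ⟨A, ?_, ?_, ?_⟩ <;> rw [splits_iff]
  · have key := keygen (fun w => w.1) _ _ hA1 hB1
    beta_reduce at key
    rw [← key] at hs1
    have := abs_le.1 hs1
    omega
  · have key := keygen (fun w => w.2.1) _ _ hA2 hB2
    beta_reduce at key
    rw [← key] at hs2
    have := abs_le.1 hs2
    omega
  · have key := keygen (fun w => w.2.2) _ _ hA3 hB3
    beta_reduce at key
    rw [← key] at hs3
    have := abs_le.1 hs3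
    omega

-- counting: each A splits at most 3 * C(k, k/2) sets
lemma card_splits_le {k : ℕ} (A : Finset (Fin k)) [DecidablePred (Splits A)] :
    (univ.filter (fun B => Splits A B)).card ≤ 3 * k.choose (k/2) := by
  classical
  have hinj : Function.Injective (fun B : Finset (Fin k) => A ∆ B) :=
    symmDiff_right_injective A
  rw [← card_image_of_injective _ hinj]
  have hsub : (univ.filter (fun B => Splits A B)).image (fun B => A ∆ B) ⊆
      powersetCard (A.card - 1) univ ∪ powersetCard A.card univ ∪ powersetCard (A.card + 1) univ := by
    intro C hC
    rcases mem_image.1 hC with ⟨B, hB, rfl⟩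
    have hsp := (splits_iff A B).1 (mem_filter.1 hB).2
    have h1 : (A ∆ B).card = (A \ B).card + (B \ A).card := by
      rw [symmDiff_def, Finset.sup_eq_union, card_union_of_disjoint (disjoint_sdiff_sdiff)]
    have h2 : (A \ B).card + (A ∩ B).card = A.card := by
      rw [card_sdiff_add_card_inter]
    have h3 : (B \ A).card + (B ∩ A).card = B.card := by
      rw [card_sdiff_add_card_inter]
    have h4 : (B ∩ A).card = (A ∩ B).card := by rw [inter_comm]
    simp only [mem_union, mem_powersetCard_univ]
    omega
  calc ((univ.filter (fun B => Splits A B)).image (fun B => A ∆ B)).card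
      ≤ _ := card_le_card hsub
    _ ≤ (powersetCard (A.card - 1) univ ∪ powersetCard A.card univ).card
        + (powersetCard (A.card + 1) univ).card := card_union_le _ _
    _ ≤ ((powersetCard (A.card - 1) univ).card + (powersetCard A.card univ).card)
        + (powersetCard (A.card + 1) univ).card := by
          exact Nat.add_le_add_right (card_union_le _ _) _
    _ ≤ 3 * k.choose (k/2) := by
          rw [card_powersetCard, card_powersetCard, card_powersetCard, card_univ,
            Fintype.card_fin]
          have a1 := Nat.choose_le_middle (A.card - 1) k
          have a2 := Nat.choose_le_middle A.card k
          have a3 := Nat.choose_le_middle (A.card + 1) k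
          omega

-- counting: number of odd-cardinality subsets
lemma card_odd_subsets {k : ℕ} (hk : 1 ≤ k) :
    (univ.filter (fun B : Finset (Fin k) => Odd B.card)).card = 2 ^ (k - 1) := by
  classical
  have hflip : ∀ B : Finset (Fin k),
      (B ∆ {(⟨0, hk⟩ : Fin k)}).card = if (⟨0, hk⟩ : Fin k) ∈ B then B.card - 1 else B.card + 1 := by
    intro B
    by_cases h : (⟨0, hk⟩ : Fin k) ∈ B
    · rw [if_pos h]
      have : B ∆ {(⟨0, hk⟩ : Fin k)} = B.erase ⟨0, hk⟩ := by
        rw [symmDiff_def, Finset.sup_eq_union]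
        have : ({(⟨0, hk⟩ : Fin k)} : Finset (Fin k)) \ B = ∅ := by
          rw [sdiff_eq_empty_iff_subset, singleton_subset_iff]; exact h
        rw [this, union_empty, sdiff_singleton_eq_erase]
      rw [this, card_erase_of_mem h]
    · rw [if_neg h]
      have : B ∆ {(⟨0, hk⟩ : Fin k)} = insert (⟨0, hk⟩ : Fin k) B := by
        rw [symmDiff_def, Finset.sup_eq_union]
        have h1 : B \ {(⟨0, hk⟩ : Fin k)} = B := by
          rw [sdiff_singleton_eq_erase, erase_eq_of_notMem h]
        have h2 : ({(⟨0, hk⟩ : Fin k)} : Finset (Fin k)) \ B = {⟨0, hk⟩} := by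
          rw [Finset.sdiff_eq_self_iff_disjoint, disjoint_singleton_left]; exact h
        rw [h1, h2, union_comm, ← insert_eq]
      rw [this, card_insert_of_notMem h]
  have hOE : (univ.filter (fun B : Finset (Fin k) => Odd B.card)).card =
      (univ.filter (fun B : Finset (Fin k) => ¬ Odd B.card)).card := by
    apply card_bij' (i := fun B _ => B ∆ {(⟨0, hk⟩ : Fin k)})
      (j := fun C _ => C ∆ {(⟨0, hk⟩ : Fin k)})
    · intro B _; exact symmDiff_symmDiff_cancel_right _ _
    · intro C _; exact symmDiff_symmDiff_cancel_right _ _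
    · intro B hB
      simp only [mem_filter, mem_univ, true_and] at hB ⊢
      rw [hflip B]
      rcases hB with ⟨n, hn⟩
      split <;> simp [Nat.odd_iff] at * <;> omega
    · intro C hC
      simp only [mem_filter, mem_univ, true_and] at hC ⊢
      rw [hflip C]
      simp only [Nat.odd_iff] at *
      split <;> [skip; omega]
      rename_i h
      have : 1 ≤ C.card := card_pos.2 ⟨_, h⟩
      omega
  have htot : (univ.filter (fun B : Finset (Fin k) => Odd B.card)).card +
      (univ.filter (fun B : Finset (Fin k) => ¬ Odd B.card)).card = 2 ^ k := by
    rw [card_filter_add_card_filter_not, card_univ, Fintype.card_finset,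
      Fintype.card_fin]
  have hpow : 2 ^ k = 2 * 2 ^ (k - 1) := by
    conv_lhs => rw [show k = (k-1) + 1 by omega]
    ring
  omega

theorem stmt_18 (k : ℕ) (hk : 2 ≤ k) (hke : Even k) (F : Finset (Finset (Fin k)))
    (hF : NSplitting 3 F) :
    (2 : ℝ) ^ (3 * k) / (54 * (k.choose (k / 2)) ^ 3) ≤ F.card := by
  classical
  set C := k.choose (k / 2) with hC
  have hCpos : 0 < C := Nat.choose_pos (Nat.div_le_self _ _)
  set O := (univ.filter (fun B : Finset (Fin k) => Odd B.card)) with hO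
  set T := ((univ : Finset (Finset (Fin k))) ×ˢ ((univ : Finset (Finset (Fin k))) ×ˢ O)) with hT
  set G : Finset (Fin k) → Finset (Finset (Fin k) × (Finset (Fin k) × Finset (Fin k))) :=
    fun A => (univ.filter (fun B => Splits A B)) ×ˢ
      ((univ.filter (fun B => Splits A B)) ×ˢ (univ.filter (fun B => Splits A B))) with hG
  have hcover : T ⊆ F.biUnion G := by
    intro p hp
    rw [hT, mem_product, mem_product] at hp
    have hodd : Odd p.2.2.card := (mem_filter.1 hp.2.2).2
    obtain ⟨A₀, h1, h2, h3⟩ := splittable_of_odd p.1 p.2.1 p.2.2 hodd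
    obtain ⟨A, hAF, hA⟩ := hF ![p.1, p.2.1, p.2.2] ⟨A₀, by
      intro i; fin_cases i <;> simpa⟩
    refine mem_biUnion.2 ⟨A, hAF, ?_⟩
    rw [hG]
    simp only [mem_product, mem_filter, mem_univ, true_and]
    refine ⟨?_, ?_, ?_⟩
    · simpa using hA 0
    · simpa using hA 1
    · simpa using hA 2
  have hGcard : ∀ A : Finset (Fin k), (G A).card ≤ 27 * C ^ 3 := by
    intro A
    rw [hG]
    simp only [card_product]
    calc (univ.filter (fun B => Splits A B)).card *
          ((univ.filter (fun B => Splits A B)).card * (univ.filter (fun B => Splits A B)).card)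
        ≤ (3 * C) * ((3 * C) * (3 * C)) := by
          have := card_splits_le A
          exact Nat.mul_le_mul this (Nat.mul_le_mul this this)
      _ = 27 * C ^ 3 := by ring
  have hTcard : T.card = 2 ^ (3 * k - 1) := by
    rw [hT]
    simp only [card_product, card_univ, Fintype.card_finset, Fintype.card_fin]
    rw [card_odd_subsets (by omega)]
    rw [← pow_add, ← pow_add]
    congr 1
    omega
  have hmain : 2 ^ (3 * k - 1) ≤ F.card * (27 * C ^ 3) := by
    calc 2 ^ (3 * k - 1) = T.card := hTcard.symm
      _ ≤ (F.biUnion G).card := card_le_card hcover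
      _ ≤ ∑ A ∈ F, (G A).card := card_biUnion_le
      _ ≤ ∑ _A ∈ F, 27 * C ^ 3 := sum_le_sum (fun A _ => hGcard A)
      _ = F.card * (27 * C ^ 3) := by rw [sum_const, smul_eq_mul]
  have hCR : (0:ℝ) < (C : ℝ) := by exact_mod_cast hCpos
  rw [div_le_iff₀ (by positivity)]
  have hNR : ((2:ℝ)) ^ (3 * k - 1) ≤ (F.card : ℝ) * (27 * (C:ℝ) ^ 3) := by
    exact_mod_cast hmain
  calc (2:ℝ) ^ (3 * k) = 2 ^ (3 * k - 1) * 2 := by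
        rw [← pow_succ]; congr 1; omega
    _ ≤ ((F.card : ℝ) * (27 * (C:ℝ) ^ 3)) * 2 := by linarith
    _ = (F.card : ℝ) * (54 * (C:ℝ) ^ 3) := by ring
end

section
/- Let s, t, b, b' be natural numbers with b ≤ b' and s + t ≤ k. Let S, T ⊆ [k] with |S| = s, |T| = t, |S ∩ T| = b, and let S', T' ⊆ [k] with |S'| = s, |T'| = t, |S' ∩ T'| = b'. Then the number of subsets A ⊆ [k] that split both S and T is at most the number of subsets A ⊆ [k] that split both S' and T' (the number of simultaneous splitters is a nondecreasing function of the intersection size). -/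
open Finset

set_option maxHeartbeats 1000000

lemma choose_mono_center : ∀ (m a b : ℕ), a ≤ b → a + b ≤ m → m.choose a ≤ m.choose b := by
  intro m
  induction m with
  | zero => intro a b hab h; have : a = 0 ∧ b = 0 := by omega
            rw [this.1, this.2]
  | succ m ih =>
    intro a b hab h
    match a, hab with
    | 0, _ => exact Nat.one_le_iff_ne_zero.mpr (Nat.choose_pos (by omega)).ne'
    | (a+1), hab =>
      obtain ⟨b, rfl⟩ : ∃ b', b = b' + 1 := ⟨b - 1, by omega⟩
      by_cases hc : a + 1 + (b + 1) ≤ m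
      · rw [Nat.choose_succ_succ, Nat.choose_succ_succ]
        exact Nat.add_le_add (ih a b (by omega) (by omega)) (ih (a+1) (b+1) (by omega) (by omega))
      · have hb1 : b + 1 = (m + 1) - (a + 1) := by omega
        rw [hb1, Nat.choose_symm (by omega)]

lemma choose_ge_sub (m x d : ℕ) (hx : m + d ≤ 2 * x) : m.choose x ≤ m.choose (x - d) := by
  by_cases hxm : x ≤ m
  · rw [← Nat.choose_symm hxm]
    exact choose_mono_center m (m - x) (x - d) (by omega) (by omega)
  · rw [Nat.choose_eq_zero_of_lt (by omega)]; exact Nat.zero_le _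

def W (s c i : ℕ) : ℕ :=
  ∑ j ∈ Finset.range (s+1), if i + j = s / 2 ∨ i + j = (s+1) / 2 then (s - c).choose j else 0

lemma sum_if_eq (f : ℕ → ℕ) (s u i : ℕ) (hu : u ≤ s) :
    (∑ j ∈ Finset.range (s+1), if i + j = u then f j else 0)
      = if i ≤ u then f (u - i) else 0 := by
  by_cases hi : i ≤ u
  · rw [if_pos hi]
    rw [Finset.sum_eq_single (u - i)]
    · rw [if_pos (by omega)]
    · intro j _ hj; rw [if_neg (by omega)]
    · intro hmem; exact absurd (Finset.mem_range.mpr (by omega)) hmem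
  · rw [if_neg hi]
    exact Finset.sum_eq_zero fun j _ => if_neg (by omega)

lemma W_even (s c i : ℕ) (hs : s % 2 = 0) :
    W s c i = if i ≤ s / 2 then (s - c).choose (s / 2 - i) else 0 := by
  have h2 : (s+1)/2 = s/2 := by omega
  rw [W]
  have he : ∀ j, (if i + j = s / 2 ∨ i + j = (s+1) / 2 then (s - c).choose j else 0)
      = if i + j = s / 2 then (s - c).choose j else 0 := by
    intro j; simp only [h2, or_self]
  rw [Finset.sum_congr rfl (fun j _ => he j)]
  exact sum_if_eq _ _ _ _ (by omega)

lemma W_odd (s c i : ℕ) (hs : s % 2 = 1) :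
    W s c i = (if i ≤ s / 2 then (s - c).choose (s / 2 - i) else 0)
      + (if i ≤ s / 2 + 1 then (s - c).choose (s / 2 + 1 - i) else 0) := by
  have h2 : (s+1)/2 = s/2 + 1 := by omega
  rw [W]
  have he : ∀ j, (if i + j = s / 2 ∨ i + j = (s+1) / 2 then (s - c).choose j else 0)
      = (if i + j = s / 2 then (s - c).choose j else 0)
        + (if i + j = s / 2 + 1 then (s - c).choose j else 0) := by
    intro j; simp only [h2]; split_ifs <;> omega
  rw [Finset.sum_congr rfl (fun j _ => he j), Finset.sum_add_distrib,
    sum_if_eq _ _ _ _ (by omega), sum_if_eq _ _ _ _ (by omega)]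

lemma W_up (s c i : ℕ) (hi : 2 * i + 1 ≤ c) (hcs : c ≤ s) : W s c i ≤ W s c (i + 1) := by
  rcases Nat.even_or_odd s with he | ho
  · have hs : s % 2 = 0 := Nat.even_iff.mp he
    rw [W_even s c i hs, W_even s c (i+1) hs]
    by_cases h1 : i + 1 ≤ s / 2
    · rw [if_pos h1, if_pos (by omega)]
      have e : s / 2 - i - 1 = s / 2 - (i+1) := by omega
      calc (s - c).choose (s / 2 - i) ≤ (s - c).choose (s / 2 - i - 1) :=
            choose_ge_sub _ _ 1 (by omega)
        _ = (s - c).choose (s / 2 - (i+1)) := by rw [e]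
    · exfalso; omega
  · have hs : s % 2 = 1 := Nat.odd_iff.mp ho
    rw [W_odd s c i hs, W_odd s c (i+1) hs]
    have key2 : (if i ≤ s/2 + 1 then (s - c).choose (s/2 + 1 - i) else 0)
        ≤ (if i + 1 ≤ s/2 then (s - c).choose (s/2 - (i+1)) else 0) := by
      by_cases h1 : i + 1 ≤ s / 2
      · rw [if_pos h1, if_pos (by omega)]
        have e : s/2 + 1 - i - 2 = s/2 - (i+1) := by omega
        calc (s - c).choose (s/2 + 1 - i) ≤ (s - c).choose (s/2 + 1 - i - 2) :=
              choose_ge_sub _ _ 2 (by omega)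
          _ = (s - c).choose (s/2 - (i+1)) := by rw [e]
      · rw [if_neg h1]
        by_cases h2 : i ≤ s/2 + 1
        · rw [if_pos h2]
          have hc : c = s ∧ i = s / 2 := by omega
          have h0 : s - c = 0 := by omega
          rw [h0, Nat.choose_eq_zero_of_lt (by omega)]
        · rw [if_neg h2]
    have key1 : (if i ≤ s/2 then (s - c).choose (s/2 - i) else 0)
        ≤ (if i + 1 ≤ s/2 + 1 then (s - c).choose (s/2 + 1 - (i+1)) else 0) := by
      by_cases h1 : i ≤ s / 2
      · rw [if_pos h1, if_pos (by omega)]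
        have e : s/2 + 1 - (i+1) = s/2 - i := by omega
        rw [e]
      · rw [if_neg h1, if_neg (by omega)]
    omega

lemma W_dn (s c i : ℕ) (hi : c ≤ 2 * i + 1) (hcs : c ≤ s) : W s c (i + 1) ≤ W s c i := by
  rcases Nat.even_or_odd s with he | ho
  · have hs : s % 2 = 0 := Nat.even_iff.mp he
    rw [W_even s c i hs, W_even s c (i+1) hs]
    by_cases h1 : i + 1 ≤ s / 2
    · rw [if_pos h1, if_pos (by omega)]
      exact choose_mono_center _ _ _ (by omega) (by omega)
    · rw [if_neg h1]; exact Nat.zero_le _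
  · have hs : s % 2 = 1 := Nat.odd_iff.mp ho
    rw [W_odd s c i hs, W_odd s c (i+1) hs]
    have key1 : (if i + 1 ≤ s/2 + 1 then (s - c).choose (s/2 + 1 - (i+1)) else 0)
        ≤ (if i ≤ s/2 then (s - c).choose (s/2 - i) else 0) := by
      by_cases h1 : i ≤ s / 2
      · rw [if_pos (by omega), if_pos h1]
        have e : s/2 + 1 - (i+1) = s/2 - i := by omega
        rw [e]
      · rw [if_neg (by omega), if_neg h1]
    have key2 : (if i + 1 ≤ s/2 then (s - c).choose (s/2 - (i+1)) else 0)
        ≤ (if i ≤ s/2 + 1 then (s - c).choose (s/2 + 1 - i) else 0) := by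
      by_cases h1 : i + 1 ≤ s / 2
      · rw [if_pos h1, if_pos (by omega)]
        exact choose_mono_center _ _ _ (by omega) (by omega)
      · rw [if_neg h1]; exact Nat.zero_le _
    omega

lemma W_pascal (s c i : ℕ) (hc : c < s) :
    W s c i = W s (c+1) i + W s (c+1) (i+1) := by
  have hm : s - c = (s - (c+1)) + 1 := by omega
  set m := s - (c+1) with hmdef
  have h1 : W s c i
      = (∑ j ∈ Finset.range s,
          if i + (j+1) = s / 2 ∨ i + (j+1) = (s+1) / 2 then (m+1).choose (j+1) else 0)
        + (if i + 0 = s / 2 ∨ i + 0 = (s+1) / 2 then (m+1).choose 0 else 0) := by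
    rw [W, hm, Finset.sum_range_succ']
  have h2 : W s (c+1) i
      = (∑ j ∈ Finset.range s,
          if i + (j+1) = s / 2 ∨ i + (j+1) = (s+1) / 2 then m.choose (j+1) else 0)
        + (if i + 0 = s / 2 ∨ i + 0 = (s+1) / 2 then m.choose 0 else 0) := by
    rw [W, Finset.sum_range_succ']
  have h3 : W s (c+1) (i+1)
      = (∑ j ∈ Finset.range s,
          if (i+1) + j = s / 2 ∨ (i+1) + j = (s+1) / 2 then m.choose j else 0)
        + (if (i+1) + s = s / 2 ∨ (i+1) + s = (s+1) / 2 then m.choose s else 0) := by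
    rw [W, Finset.sum_range_succ]
  have h4 : (if (i+1) + s = s / 2 ∨ (i+1) + s = (s+1) / 2 then m.choose s else 0) = 0 := by
    split_ifs with h
    · omega
    · rfl
  have h5 : ∀ j, (if i + (j+1) = s / 2 ∨ i + (j+1) = (s+1) / 2 then (m+1).choose (j+1) else 0)
      = (if i + (j+1) = s / 2 ∨ i + (j+1) = (s+1) / 2 then m.choose (j+1) else 0)
        + (if (i+1) + j = s / 2 ∨ (i+1) + j = (s+1) / 2 then m.choose j else 0) := by
    intro j
    have hiff : ((i+1) + j = s / 2 ∨ (i+1) + j = (s+1) / 2)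
        ↔ (i + (j+1) = s / 2 ∨ i + (j+1) = (s+1) / 2) := by omega
    rw [if_congr hiff rfl rfl, Nat.choose_succ_succ]
    split_ifs <;> simp [Nat.succ_eq_add_one] <;> omega
  rw [h1, h2, h3, h4, Finset.sum_congr rfl (fun j _ => h5 j), Finset.sum_add_distrib]
  simp only [Nat.choose_zero_right, add_zero]
  omega

def Fc (s t b : ℕ) : ℕ := ∑ i ∈ Finset.range (b+1), b.choose i * (W s b i * W t b i)

lemma mul_rearrange (x y X Y : ℕ) (h : (x ≤ y ∧ X ≤ Y) ∨ (y ≤ x ∧ Y ≤ X)) :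
    (x + y) * (X + Y) ≤ 2 * (x * X + y * Y) := by
  rcases h with ⟨h1, h2⟩ | ⟨h1, h2⟩
  · obtain ⟨d, rfl⟩ := Nat.le.dest h1
    obtain ⟨e, rfl⟩ := Nat.le.dest h2
    nlinarith
  · obtain ⟨d, rfl⟩ := Nat.le.dest h1
    obtain ⟨e, rfl⟩ := Nat.le.dest h2
    nlinarith

lemma Fc_step (s t b : ℕ) (hbs : b + 1 ≤ s) (hbt : b + 1 ≤ t) :
    Fc s t b ≤ 2 * Fc s t (b+1) := by
  set V : ℕ → ℕ := fun i => W s (b+1) i * W t (b+1) i with hV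
  have expand : Fc s t b = ∑ i ∈ Finset.range (b+1),
      b.choose i * ((W s (b+1) i + W s (b+1) (i+1)) * (W t (b+1) i + W t (b+1) (i+1))) := by
    refine Finset.sum_congr rfl fun i _ => ?_
    rw [← W_pascal s b i (by omega), ← W_pascal t b i (by omega)]
  have point : ∀ i, b.choose i *
        ((W s (b+1) i + W s (b+1) (i+1)) * (W t (b+1) i + W t (b+1) (i+1)))
      ≤ b.choose i * (2 * (V i + V (i+1))) := by
    intro i
    apply Nat.mul_le_mul_left
    have hVe : (2 * (V i + V (i+1))) = 2 * (W s (b+1) i * W t (b+1) i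
        + W s (b+1) (i+1) * W t (b+1) (i+1)) := by rw [hV]
    rw [hVe]
    apply mul_rearrange
    by_cases hcase : 2 * i + 1 ≤ b + 1
    · exact Or.inl ⟨W_up s (b+1) i hcase hbs, W_up t (b+1) i hcase hbt⟩
    · exact Or.inr ⟨W_dn s (b+1) i (by omega) hbs, W_dn t (b+1) i (by omega) hbt⟩
  have step1 : Fc s t b ≤ ∑ i ∈ Finset.range (b+1), b.choose i * (2 * (V i + V (i+1))) := by
    rw [expand]; exact Finset.sum_le_sum fun i _ => point i
  have key : ∑ i ∈ Finset.range (b+1), b.choose i * (V i + V (i+1)) = Fc s t (b+1) := by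
    have hFc : Fc s t (b+1) = ∑ i ∈ Finset.range (b+2), (b+1).choose i * V i := rfl
    have e1 : ∑ i ∈ Finset.range (b+1), b.choose i * (V i + V (i+1))
        = (∑ i ∈ Finset.range (b+1), b.choose i * V i)
          + ∑ i ∈ Finset.range (b+1), b.choose i * V (i+1) := by
      rw [← Finset.sum_add_distrib]
      exact Finset.sum_congr rfl fun i _ => by ring
    have e2 : ∑ i ∈ Finset.range (b+2), (b+1).choose i * V i
        = (∑ i ∈ Finset.range (b+1), (b+1).choose (i+1) * V (i+1))
          + (b+1).choose 0 * V 0 := Finset.sum_range_succ' _ (b+1)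
    have e4 : ∑ i ∈ Finset.range (b+2), b.choose i * V i
        = (∑ i ∈ Finset.range (b+1), b.choose (i+1) * V (i+1))
          + b.choose 0 * V 0 := Finset.sum_range_succ' _ (b+1)
    have e3 : ∑ i ∈ Finset.range (b+2), b.choose i * V i
        = ∑ i ∈ Finset.range (b+1), b.choose i * V i := by
      rw [Finset.sum_range_succ, Nat.choose_succ_self, zero_mul, add_zero]
    have e5 : ∑ i ∈ Finset.range (b+1), (b+1).choose (i+1) * V (i+1)
        = (∑ i ∈ Finset.range (b+1), b.choose i * V (i+1))
          + ∑ i ∈ Finset.range (b+1), b.choose (i+1) * V (i+1) := by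
      rw [← Finset.sum_add_distrib]
      refine Finset.sum_congr rfl fun i _ => ?_
      rw [Nat.choose_succ_succ]; ring
    have c0 : (b+1).choose 0 * V 0 = b.choose 0 * V 0 := by simp
    omega
  calc Fc s t b ≤ ∑ i ∈ Finset.range (b+1), b.choose i * (2 * (V i + V (i+1))) := step1
    _ = 2 * ∑ i ∈ Finset.range (b+1), b.choose i * (V i + V (i+1)) := by
        rw [Finset.mul_sum]; exact Finset.sum_congr rfl fun i _ => by ring
    _ = 2 * Fc s t (b+1) := by rw [key]

lemma W_short (s b i : ℕ) (hbs : b ≤ s) :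
    W s b i = ∑ j ∈ Finset.range (s - b + 1),
      if i + j = s / 2 ∨ i + j = (s+1) / 2 then (s - b).choose j else 0 := by
  rw [W]; symm
  apply Finset.sum_subset
  · intro x hx; simp only [Finset.mem_range] at *; omega
  · intro x _ hx2
    simp only [Finset.mem_range] at hx2
    split_ifs
    · exact Nat.choose_eq_zero_of_lt (by omega)
    · rfl

lemma sum_powerset_card {X : Type*} [DecidableEq X] (u : Finset X) (f : ℕ → ℕ) :
    ∑ a ∈ u.powerset, f a.card = ∑ j ∈ Finset.range (u.card + 1), u.card.choose j * f j := by
  rw [Finset.sum_powerset]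
  refine Finset.sum_congr rfl fun j hj => ?_
  rw [Finset.sum_congr rfl (fun t ht => by rw [(Finset.mem_powersetCard.mp ht).2]),
      Finset.sum_const, Finset.card_powersetCard, smul_eq_mul]

lemma quad_count {X : Type*} [DecidableEq X] (I S₀ T₀ R : Finset X)
    (p q : ℕ → ℕ → Prop) [∀ i j, Decidable (p i j)] [∀ i j, Decidable (q i j)] :
    ((I.powerset ×ˢ S₀.powerset ×ˢ T₀.powerset ×ˢ R.powerset).filter
        (fun z : Finset X × Finset X × Finset X × Finset X =>
          p z.1.card z.2.1.card ∧ q z.1.card z.2.2.1.card)).card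
    = ∑ i ∈ Finset.range (I.card + 1), I.card.choose i *
        ((∑ j ∈ Finset.range (S₀.card + 1), if p i j then S₀.card.choose j else 0) *
         ((∑ l ∈ Finset.range (T₀.card + 1), if q i l then T₀.card.choose l else 0)
           * 2 ^ R.card)) := by
  classical
  rw [Finset.card_filter, Finset.sum_product]
  have h23 : ∀ i : ℕ, (∑ y ∈ S₀.powerset ×ˢ T₀.powerset ×ˢ R.powerset,
        if p i y.1.card ∧ q i y.2.1.card then (1:ℕ) else 0)
      = (∑ j ∈ Finset.range (S₀.card + 1), if p i j then S₀.card.choose j else 0) *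
        ((∑ l ∈ Finset.range (T₀.card + 1), if q i l then T₀.card.choose l else 0)
          * 2 ^ R.card) := by
    intro i
    rw [Finset.sum_product]
    have inner2 : ∀ a₂ : Finset X, (∑ z ∈ T₀.powerset ×ˢ R.powerset,
          if p i a₂.card ∧ q i z.1.card then (1:ℕ) else 0)
        = (if p i a₂.card then (1:ℕ) else 0) *
          ((∑ l ∈ Finset.range (T₀.card + 1), if q i l then T₀.card.choose l else 0)
            * 2 ^ R.card) := by
      intro a₂
      rw [Finset.sum_product]
      have i3 : ∀ a₃ : Finset X,
          (∑ _a₄ ∈ R.powerset, if p i a₂.card ∧ q i a₃.card then (1:ℕ) else 0)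
          = if p i a₂.card ∧ q i a₃.card then 2 ^ R.card else 0 := by
        intro a₃
        rw [Finset.sum_const, Finset.card_powerset, smul_eq_mul, mul_ite, mul_one, mul_zero]
      rw [Finset.sum_congr rfl (fun a₃ _ => i3 a₃)]
      have i2 : (∑ a₃ ∈ T₀.powerset, if p i a₂.card ∧ q i a₃.card then 2 ^ R.card else 0)
          = ∑ l ∈ Finset.range (T₀.card + 1), T₀.card.choose l *
              (if p i a₂.card ∧ q i l then 2 ^ R.card else 0) :=
        sum_powerset_card T₀ (fun l => if p i a₂.card ∧ q i l then 2 ^ R.card else 0)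
      rw [i2]
      have i4 : ∀ l, T₀.card.choose l * (if p i a₂.card ∧ q i l then 2 ^ R.card else 0)
          = (if p i a₂.card then (1:ℕ) else 0) *
            ((if q i l then T₀.card.choose l else 0) * 2 ^ R.card) := by
        intro l
        by_cases hp : p i a₂.card <;> by_cases hq : q i l <;> simp [hp, hq] <;> ring
      rw [Finset.sum_congr rfl (fun l _ => i4 l), ← Finset.mul_sum, ← Finset.sum_mul]
    rw [Finset.sum_congr rfl (fun a₂ _ => inner2 a₂)]
    have i5 : (∑ a₂ ∈ S₀.powerset, (if p i a₂.card then (1:ℕ) else 0) *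
          ((∑ l ∈ Finset.range (T₀.card + 1), if q i l then T₀.card.choose l else 0)
            * 2 ^ R.card))
        = ∑ j ∈ Finset.range (S₀.card + 1), S₀.card.choose j * ((if p i j then (1:ℕ) else 0) *
            ((∑ l ∈ Finset.range (T₀.card + 1), if q i l then T₀.card.choose l else 0)
              * 2 ^ R.card)) :=
      sum_powerset_card S₀ (fun j => (if p i j then (1:ℕ) else 0) *
        ((∑ l ∈ Finset.range (T₀.card + 1), if q i l then T₀.card.choose l else 0)
          * 2 ^ R.card))
    rw [i5]
    conv_rhs => rw [Finset.sum_mul]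
    refine Finset.sum_congr rfl fun j _ => ?_
    split_ifs <;> ring
  rw [Finset.sum_congr rfl (fun a₁ _ => h23 a₁.card)]
  exact sum_powerset_card I (fun i =>
    (∑ j ∈ Finset.range (S₀.card + 1), if p i j then S₀.card.choose j else 0) *
    ((∑ l ∈ Finset.range (T₀.card + 1), if q i l then T₀.card.choose l else 0) * 2 ^ R.card))

instance {X : Type*} [DecidableEq X] (A B : Finset X) : Decidable (Splits A B) := by
  unfold Splits; infer_instance

lemma main_bij (k s t : ℕ) (S T : Finset (Fin k)) (hS : S.card = s) (hT : T.card = t) :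
    (Finset.univ.filter (fun A : Finset (Fin k) => Splits A S ∧ Splits A T)).card
      = (((S ∩ T).powerset ×ˢ (S \ T).powerset ×ˢ (T \ S).powerset ×ˢ ((S ∪ T)ᶜ).powerset).filter
          (fun q : Finset (Fin k) × Finset (Fin k) × Finset (Fin k) × Finset (Fin k) =>
            (q.1.card + q.2.1.card = s / 2 ∨ q.1.card + q.2.1.card = (s+1) / 2)
            ∧ (q.1.card + q.2.2.1.card = t / 2 ∨ q.1.card + q.2.2.1.card = (t+1) / 2))).card := by
  classical
  have dIS : Disjoint (S ∩ T) (S \ T) := by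
    rw [Finset.disjoint_left]
    intro x hx1 hx2
    rw [Finset.mem_inter] at hx1
    rw [Finset.mem_sdiff] at hx2
    tauto
  have dIT : Disjoint (S ∩ T) (T \ S) := by
    rw [Finset.disjoint_left]
    intro x hx1 hx2
    rw [Finset.mem_inter] at hx1
    rw [Finset.mem_sdiff] at hx2
    tauto
  have splitS : ∀ A : Finset (Fin k),
      (A ∩ S).card = (A ∩ (S ∩ T)).card + (A ∩ (S \ T)).card := by
    intro A
    have hdecomp : A ∩ S = (A ∩ (S ∩ T)) ∪ (A ∩ (S \ T)) := by
      ext x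
      simp only [Finset.mem_inter, Finset.mem_union, Finset.mem_sdiff]
      by_cases hxT : x ∈ T <;> itauto
    rw [hdecomp]
    exact Finset.card_union_of_disjoint
      (dIS.mono Finset.inter_subset_right Finset.inter_subset_right)
  have splitT : ∀ A : Finset (Fin k),
      (A ∩ T).card = (A ∩ (S ∩ T)).card + (A ∩ (T \ S)).card := by
    intro A
    have hdecomp : A ∩ T = (A ∩ (S ∩ T)) ∪ (A ∩ (T \ S)) := by
      ext x
      simp only [Finset.mem_inter, Finset.mem_union, Finset.mem_sdiff]
      by_cases hxS : x ∈ S <;> itauto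
    rw [hdecomp]
    exact Finset.card_union_of_disjoint
      (dIT.mono Finset.inter_subset_right Finset.inter_subset_right)
  apply Finset.card_bij (fun A _ => (A ∩ (S ∩ T), A ∩ (S \ T), A ∩ (T \ S), A ∩ (S ∪ T)ᶜ))
  · intro A hA
    simp only [Finset.mem_filter, Finset.mem_univ, true_and] at hA
    obtain ⟨hAS, hAT⟩ := hA
    rw [Splits, hS] at hAS
    rw [Splits, hT] at hAT
    simp only [Finset.mem_filter, Finset.mem_product, Finset.mem_powerset]
    refine ⟨⟨Finset.inter_subset_right, Finset.inter_subset_right,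
      Finset.inter_subset_right, Finset.inter_subset_right⟩, ?_, ?_⟩
    · rw [← splitS A]; exact hAS
    · rw [← splitT A]; exact hAT
  · intro A₁ h₁ A₂ h₂ h
    simp only [Prod.mk.injEq] at h
    obtain ⟨e1, e2, e3, e4⟩ := h
    ext x
    have m1 := Finset.ext_iff.mp e1 x
    have m2 := Finset.ext_iff.mp e2 x
    have m3 := Finset.ext_iff.mp e3 x
    have m4 := Finset.ext_iff.mp e4 x
    simp only [Finset.mem_inter, Finset.mem_sdiff, Finset.mem_compl,
      Finset.mem_union] at m1 m2 m3 m4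
    by_cases hxS : x ∈ S <;> by_cases hxT : x ∈ T <;> itauto
  · rintro ⟨A₁, A₂, A₃, A₄⟩ hq
    simp only [Finset.mem_filter, Finset.mem_product, Finset.mem_powerset] at hq
    obtain ⟨⟨s1, s2, s3, s4⟩, hc1, hc2⟩ := hq
    have keyx : ∀ x : Fin k, (x ∈ A₁ → x ∈ S ∧ x ∈ T) ∧ (x ∈ A₂ → x ∈ S ∧ x ∉ T)
        ∧ (x ∈ A₃ → x ∈ T ∧ x ∉ S) ∧ (x ∈ A₄ → ¬(x ∈ S ∨ x ∈ T)) := by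
      intro x
      refine ⟨fun hx => Finset.mem_inter.mp (s1 hx), fun hx => Finset.mem_sdiff.mp (s2 hx),
        fun hx => Finset.mem_sdiff.mp (s3 hx), fun hx => ?_⟩
      have h4 := s4 hx
      rw [Finset.mem_compl, Finset.mem_union] at h4
      exact h4
    have g1 : (A₁ ∪ A₂ ∪ A₃ ∪ A₄) ∩ (S ∩ T) = A₁ := by
      ext x
      obtain ⟨j1, j2, j3, j4⟩ := keyx x
      simp only [Finset.mem_inter, Finset.mem_union]
      itauto
    have g2 : (A₁ ∪ A₂ ∪ A₃ ∪ A₄) ∩ (S \ T) = A₂ := by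
      ext x
      obtain ⟨j1, j2, j3, j4⟩ := keyx x
      simp only [Finset.mem_inter, Finset.mem_sdiff, Finset.mem_union]
      itauto
    have g3 : (A₁ ∪ A₂ ∪ A₃ ∪ A₄) ∩ (T \ S) = A₃ := by
      ext x
      obtain ⟨j1, j2, j3, j4⟩ := keyx x
      simp only [Finset.mem_inter, Finset.mem_sdiff, Finset.mem_union]
      itauto
    have g4 : (A₁ ∪ A₂ ∪ A₃ ∪ A₄) ∩ (S ∪ T)ᶜ = A₄ := by
      ext x
      obtain ⟨j1, j2, j3, j4⟩ := keyx x
      simp only [Finset.mem_inter, Finset.mem_compl, Finset.mem_union]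
      itauto
    refine ⟨A₁ ∪ A₂ ∪ A₃ ∪ A₄, Finset.mem_filter.mpr ⟨Finset.mem_univ _, ?_, ?_⟩, ?_⟩
    · rw [Splits, hS, splitS _, g1, g2]; exact hc1
    · rw [Splits, hT, splitT _, g1, g3]; exact hc2
    · simp only [Prod.mk.injEq]
      exact ⟨g1, g2, g3, g4⟩

lemma count_eq (k s t b : ℕ) (hst : s + t ≤ k) (S T : Finset (Fin k))
    (hS : S.card = s) (hT : T.card = t) (hb : (S ∩ T).card = b) :
    (Finset.univ.filter (fun A : Finset (Fin k) => Splits A S ∧ Splits A T)).card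
      = 2 ^ (k - (s + t - b)) * Fc s t b := by
  classical
  have hbs : b ≤ s := by
    rw [← hS, ← hb]; exact Finset.card_le_card Finset.inter_subset_left
  have hbt : b ≤ t := by
    rw [← hT, ← hb]; exact Finset.card_le_card Finset.inter_subset_right
  have cS₀ : (S \ T).card = s - b := by
    have := Finset.card_sdiff_add_card_inter S T
    omega
  have cT₀ : (T \ S).card = t - b := by
    have := Finset.card_sdiff_add_card_inter T S
    rw [Finset.inter_comm] at this
    omega
  have cR : ((S ∪ T)ᶜ).card = k - (s + t - b) := by
    have h1 := Finset.card_union_add_card_inter S T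
    have h2 := Finset.card_compl (S ∪ T)
    rw [Fintype.card_fin] at h2
    omega
  rw [main_bij k s t S T hS hT]
  have hq := quad_count (S ∩ T) (S \ T) (T \ S) ((S ∪ T)ᶜ)
      (fun i j => i + j = s / 2 ∨ i + j = (s+1) / 2)
      (fun i l => i + l = t / 2 ∨ i + l = (t+1) / 2)
  refine hq.trans ?_
  rw [hb, cS₀, cT₀, cR, Fc, Finset.mul_sum]
  refine Finset.sum_congr rfl fun i _ => ?_
  rw [← W_short s b i hbs, ← W_short t b i hbt]
  ring

theorem stmt_19 (k s t b b' : ℕ) (hbb' : b ≤ b') (hst : s + t ≤ k)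
    (S T S' T' : Finset (Fin k))
    (hS : S.card = s) (hT : T.card = t) (hb : (S ∩ T).card = b)
    (hS' : S'.card = s) (hT' : T'.card = t) (hb' : (S' ∩ T').card = b') :
    (Finset.univ.filter (fun A : Finset (Fin k) => Splits A S ∧ Splits A T)).card ≤
      (Finset.univ.filter (fun A : Finset (Fin k) => Splits A S' ∧ Splits A T')).card := by
  have hbs' : b' ≤ s := by
    rw [← hS', ← hb']; exact Finset.card_le_card Finset.inter_subset_left
  have hbt' : b' ≤ t := by
    rw [← hT', ← hb']; exact Finset.card_le_card Finset.inter_subset_right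
  rw [count_eq k s t b hst S T hS hT hb, count_eq k s t b' hst S' T' hS' hT' hb']
  have mono : ∀ n, b ≤ n → n ≤ s → n ≤ t →
      2 ^ (k - (s + t - b)) * Fc s t b ≤ 2 ^ (k - (s + t - n)) * Fc s t n := by
    intro n
    induction n with
    | zero =>
      intro h1 _ _
      have hb0 : b = 0 := by omega
      subst hb0
      exact le_rfl
    | succ n ih =>
      intro h1 h2 h3
      by_cases hbn : b = n + 1
      · subst hbn; exact le_rfl
      · calc 2 ^ (k - (s + t - b)) * Fc s t b
            ≤ 2 ^ (k - (s + t - n)) * Fc s t n := ih (by omega) (by omega) (by omega)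
          _ ≤ 2 ^ (k - (s + t - (n+1))) * Fc s t (n+1) := by
              have hstep := Fc_step s t n (by omega) (by omega)
              have hexp : k - (s + t - (n+1)) = (k - (s + t - n)) + 1 := by omega
              rw [hexp, pow_succ]
              calc 2 ^ (k - (s + t - n)) * Fc s t n
                  ≤ 2 ^ (k - (s + t - n)) * (2 * Fc s t (n+1)) :=
                    Nat.mul_le_mul_left _ hstep
                _ = 2 ^ (k - (s + t - n)) * 2 * Fc s t (n+1) := by ring
  exact mono b' hbb' hbs' hbt'
end
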